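/- arXiv:math/0204147 — 7 statements merged into one kernel-verified Lean document; each statement's English description precedes it below -/
import Mathlib

section
/- Let G be a topological Abelian group and let D and S be dense subgroups with D ⊆ S ⊆ G. Then D determines G if and only if D determines S and S determines G. In particular, a dense subgroup of a determined group is determined. -/
open scoped Pointwise
noncomputable section

/-- The circle group `ℝ/ℤ`. -/
abbrev Circ : Type := AddCircle (1 : ℝ)

/-- The inclusion of a subgroup as a continuous homomorphism. -/
def inclHom {G : Type*} [AddCommGroup G] [TopologicalSpace G] (D : AddSubgroup G) :
    ContinuousAddMonoidHom D G := ⟨D.subtype, continuous_subtype_val⟩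

/-- Restriction of characters of `G` to a subgroup `D`; both dual groups carry the
compact-open topology. -/
def resChar {G : Type*} [AddCommGroup G] [TopologicalSpace G] (D : AddSubgroup G) :
    ContinuousAddMonoidHom G Circ → ContinuousAddMonoidHom D Circ :=
  fun h => h.comp (inclHom D)

/-- `D` determines `G`: the restriction map `Ĝ → D̂` is a topological isomorphism. -/
def Determines {G : Type*} [AddCommGroup G] [TopologicalSpace G] (D : AddSubgroup G) : Prop :=
  IsHomeomorph (resChar D)

/-- `G` is determined: every dense subgroup determines `G`. -/
def DeterminedGrp (G : Type*) [AddCommGroup G] [TopologicalSpace G] : Prop :=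
  ∀ D : AddSubgroup G, Dense (D : Set G) → Determines D

/-- A subset `B` of a topological abelian group is bounded. -/
def AddBoundedSet {G : Type*} [AddCommGroup G] [TopologicalSpace G] (B : Set G) : Prop :=
  ∀ V : Set G, IsOpen V → V.Nonempty → ∃ F : Finset G, B ⊆ ↑F + V

/-- A locally bounded topological abelian group. -/
def LocallyBoundedGrp (G : Type*) [AddCommGroup G] [TopologicalSpace G] : Prop :=
  ∃ B : Set G, IsOpen B ∧ B.Nonempty ∧ AddBoundedSet B

/-- A totally bounded topological abelian group. -/
def TotallyBoundedGrp (G : Type*) [AddCommGroup G] [TopologicalSpace G] : Prop :=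
  AddBoundedSet (Set.univ : Set G)

/-- The Bohr topology on `G`: the initial topology from all continuous characters. -/
def bohrTop (G : Type*) [AddCommGroup G] [TopologicalSpace G] : TopologicalSpace G :=
  ⨅ h : ContinuousAddMonoidHom G Circ, TopologicalSpace.induced h inferInstance

/-- `G` with its Bohr topology, `G⁺`. -/
def BohrPlus (G : Type*) : Type _ := G

instance {G : Type*} [AddCommGroup G] : AddCommGroup (BohrPlus G) := ‹AddCommGroup G›

instance {G : Type*} [AddCommGroup G] [TopologicalSpace G] : TopologicalSpace (BohrPlus G) :=
  bohrTop G

/-- A subgroup of `G` viewed as a subgroup of `G⁺`. -/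
def bohrSub {G : Type*} [AddCommGroup G] (D : AddSubgroup G) : AddSubgroup (BohrPlus G) := D

/-- The evaluation homomorphism `G → Circ^Ĝ`. -/
def evalHom (G : Type*) [AddCommGroup G] [TopologicalSpace G] :
    G →+ (ContinuousAddMonoidHom G Circ → Circ) where
  toFun x h := h x
  map_zero' := by ext h; simp
  map_add' x y := by ext h; simp

/-- The Bohr compactification of `G`: the closure of the canonical image of `G`
in `Circ^Ĝ`. -/
def bohrComp (G : Type*) [AddCommGroup G] [TopologicalSpace G] :
    AddSubgroup (ContinuousAddMonoidHom G Circ → Circ) :=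
  ((evalHom G).range).topologicalClosure

/-- The image of `G⁺` as a dense subgroup of `b(G)`. -/
def bohrImage (G : Type*) [AddCommGroup G] [TopologicalSpace G] :
    AddSubgroup (bohrComp G) :=
  ((evalHom G).range).addSubgroupOf (bohrComp G)

/-- The direct sum `⊕ᵢ Dᵢ`: elements of the product with finite support lying in `∏ᵢ Dᵢ`. -/
def directSum {ι : Type*} {G : ι → Type*} [∀ i, AddCommGroup (G i)]
    (D : ∀ i, AddSubgroup (G i)) : AddSubgroup (∀ i, G i) where
  carrier := {x | (∀ i, x i ∈ D i) ∧ {i | x i ≠ 0}.Finite}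
  zero_mem' := ⟨fun i => zero_mem _, by simp⟩
  add_mem' := fun {a b} ha hb => ⟨fun i => add_mem (ha.1 i) (hb.1 i),
    (ha.2.union hb.2).subset fun i hi => by
      simp only [Set.mem_union, Set.mem_setOf_eq]
      by_contra h
      push_neg at h
      exact hi (by simp [h.1, h.2])⟩
  neg_mem' := fun {a} ha => ⟨fun i => neg_mem (ha.1 i), ha.2.subset fun i hi => by
    simpa using hi⟩

/-- The weight of a topological space: the minimal cardinality of a base. -/
def tweight (X : Type*) [TopologicalSpace X] : Cardinal :=
  ⨅ s : {s : Set (Set X) // TopologicalSpace.IsTopologicalBasis s}, Cardinal.mk s.1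

/-- The cofinally zero property. -/
def CofinallyZero (G : Type*) [AddCommGroup G] [TopologicalSpace G] : Prop :=
  ∀ K : Set G, IsCompact K → ∃ F : Set G, IsCompact F ∧
    ∀ h : ContinuousAddMonoidHom G Circ, (∀ x ∈ F, ‖h x‖ < 1/4) → ∀ x ∈ K, h x = 0

section Aux

variable {H : Type*} [AddCommGroup H] [TopologicalSpace H] [IsTopologicalAddGroup H]

lemma resChar_injective (D : AddSubgroup H) (hD : Dense (D : Set H)) :
    Function.Injective (resChar D) := by
  intro h1 h2 hres
  ext x
  have := Continuous.ext_on hD h1.continuous h2.continuous (fun y hy => by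
    exact DFunLike.congr_fun hres (⟨y, hy⟩ : D))
  exact congrFun this x

lemma resChar_surjective (D : AddSubgroup H) (hD : Dense (D : Set H)) :
    Function.Surjective (resChar D) := by
  letI : UniformSpace H := IsTopologicalAddGroup.rightUniformSpace H
  haveI : IsUniformAddGroup H := isUniformAddGroup_of_addCommGroup
  intro f
  have he : IsUniformInducing ((↑) : D → H) :=
    isUniformEmbedding_subtype_val.isUniformInducing
  have hd : DenseRange ((↑) : D → H) := hD.denseRange_val
  have hf : UniformContinuous f :=
    uniformContinuous_of_continuousAt_zero f f.continuous.continuousAt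
  let F : H → Circ := (he.isDenseInducing hd).extend f
  have hFc : Continuous F := (uniformContinuous_uniformly_extend he hd hf).continuous
  have heq : ∀ x : D, F (x : H) = f x := fun x =>
    (he.isDenseInducing hd).extend_eq f.continuous x
  have hadd : ∀ x y : H, F (x + y) = F x + F y := by
    have h1 : Continuous fun p : H × H => F (p.1 + p.2) :=
      hFc.comp (continuous_fst.add continuous_snd)
    have h2 : Continuous fun p : H × H => F p.1 + F p.2 :=
      (hFc.comp continuous_fst).add (hFc.comp continuous_snd)
    have hdd : Dense ((D : Set H) ×ˢ (D : Set H)) := hD.prod hD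
    have := Continuous.ext_on hdd h1 h2 (fun p hp => by
      have hx : p.1 ∈ D := hp.1
      have hy : p.2 ∈ D := hp.2
      have e1 : F (p.1 + p.2) = f (⟨p.1, hx⟩ + ⟨p.2, hy⟩) := heq ⟨p.1 + p.2, add_mem hx hy⟩
      simp only [e1, map_add]
      rw [heq ⟨p.1, hx⟩, heq ⟨p.2, hy⟩])
    intro x y
    exact congrFun this (x, y)
  have hzero : F 0 = 0 := by
    have := heq 0
    simpa using this
  refine ⟨⟨⟨⟨F, hzero⟩, fun x y => hadd x y⟩, hFc⟩, ?_⟩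
  ext x
  exact heq x

end Aux

lemma dense_addSubgroupOf {G : Type*} [AddCommGroup G] [TopologicalSpace G]
    {D S : AddSubgroup G} (hDS : D ≤ S) (hD : Dense (D : Set G)) :
    Dense ((D.addSubgroupOf S : AddSubgroup S) : Set S) := by
  rw [dense_iff_inter_open]
  rintro U ⟨V, hV, rfl⟩ ⟨⟨s, hs⟩, hsV⟩
  obtain ⟨d, hdV, hdD⟩ := (dense_iff_inter_open.mp hD) V hV ⟨s, hsV⟩
  exact ⟨⟨d, hDS hdD⟩, hdV, AddSubgroup.mem_addSubgroupOf.mpr hdD⟩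

lemma determines_iff {G : Type*} [AddCommGroup G] [TopologicalSpace G] [IsTopologicalAddGroup G]
    (D S : AddSubgroup G) (hDS : D ≤ S)
    (hD : Dense (D : Set G)) (hS : Dense (S : Set G)) :
    Determines D ↔ Determines (D.addSubgroupOf S) ∧ Determines S := by
  have hD' : Dense ((D.addSubgroupOf S : AddSubgroup S) : Set S) := dense_addSubgroupOf hDS hD
  -- the two intermediate restriction maps
  set f := resChar (G := G) S with hfdef
  set g := resChar (G := S) (D.addSubgroupOf S) with hgdef
  -- the canonical continuous isomorphisms between D and D.addSubgroupOf S
  let eInv : ContinuousAddMonoidHom D (D.addSubgroupOf S) :=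
    ⟨⟨⟨fun x => ⟨⟨x.1, hDS x.2⟩, AddSubgroup.mem_addSubgroupOf.mpr x.2⟩, rfl⟩,
      fun _ _ => rfl⟩, ((continuous_subtype_val.subtype_mk _).subtype_mk _)⟩
  let e : ContinuousAddMonoidHom (D.addSubgroupOf S) D :=
    ⟨⟨⟨fun y => ⟨y.1.1, AddSubgroup.mem_addSubgroupOf.mp y.2⟩, rfl⟩,
      fun _ _ => rfl⟩, ((continuous_subtype_val.comp continuous_subtype_val).subtype_mk _)⟩
  set Ψ : ContinuousAddMonoidHom (D.addSubgroupOf S) Circ → ContinuousAddMonoidHom D Circ :=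
    fun k => k.comp eInv with hΨdef
  set Φ : ContinuousAddMonoidHom D Circ → ContinuousAddMonoidHom (D.addSubgroupOf S) Circ :=
    fun k => k.comp e with hΦdef
  have hΨc : Continuous Ψ := ContinuousAddMonoidHom.continuous_comp_left eInv
  have hΦc : Continuous Φ := ContinuousAddMonoidHom.continuous_comp_left e
  have hΨΦ : ∀ k, Ψ (Φ k) = k := fun k => rfl
  have hΦΨ : ∀ k, Φ (Ψ k) = k := fun k => rfl
  have hΨ : IsHomeomorph Ψ :=
    isHomeomorph_iff_exists_inverse.mpr ⟨hΨc, Φ, hΦΨ, hΨΦ, hΦc⟩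
  have hfc : Continuous f := ContinuousAddMonoidHom.continuous_comp_left (inclHom S)
  have hgc : Continuous g := ContinuousAddMonoidHom.continuous_comp_left (inclHom _)
  have hfsurj : Function.Surjective f := resChar_surjective S hS
  have hgsurj : Function.Surjective g := resChar_surjective _ hD'
  have key : resChar D = Ψ ∘ g ∘ f := rfl
  constructor
  · intro hF
    replace hF : IsHomeomorph (Ψ ∘ g ∘ f) := by rw [← key]; exact hF
    obtain ⟨hFc, Finv, hlinv, hrinv, hFinvc⟩ := isHomeomorph_iff_exists_inverse.mp hF
    -- f is a homeomorphism
    have hfl : Function.LeftInverse (Finv ∘ Ψ ∘ g) f := fun h => hlinv h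
    have hfhom : IsHomeomorph f :=
      isHomeomorph_iff_exists_inverse.mpr ⟨hfc, Finv ∘ Ψ ∘ g, hfl,
        hfl.rightInverse_of_surjective hfsurj, hFinvc.comp (hΨc.comp hgc)⟩
    -- g is a homeomorphism
    have hgl : Function.LeftInverse (f ∘ Finv ∘ Ψ) g := by
      intro k
      obtain ⟨h, rfl⟩ := hfsurj k
      exact congrArg f (hlinv h)
    have hghom : IsHomeomorph g :=
      isHomeomorph_iff_exists_inverse.mpr ⟨hgc, f ∘ Finv ∘ Ψ, hgl,
        hgl.rightInverse_of_surjective hgsurj, hfc.comp (hFinvc.comp hΨc)⟩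
    exact ⟨hghom, hfhom⟩
  · rintro ⟨hghom, hfhom⟩
    show IsHomeomorph (resChar D)
    rw [key]
    exact (hΨ.comp hghom).comp hfhom

/-- Let `D ⊆ S ⊆ G` be dense subgroups of a topological abelian group `G`.  Then `D`
determines `G` iff `D` determines `S` and `S` determines `G`.  In particular a dense
subgroup of a determined group is determined. -/
theorem statement0 {G : Type*} [AddCommGroup G] [TopologicalSpace G] [IsTopologicalAddGroup G]
    (D S : AddSubgroup G) (hDS : D ≤ S)
    (hD : Dense (D : Set G)) (hS : Dense (S : Set G)) :
    (Determines D ↔ Determines (D.addSubgroupOf S) ∧ Determines S) ∧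
    (DeterminedGrp G → DeterminedGrp S) := by
  refine ⟨determines_iff D S hDS hD hS, ?_⟩
  intro hG D' hD'd
  have hle : D'.map S.subtype ≤ S := by
    rintro x ⟨y, hy, rfl⟩; exact y.2
  have hdense : Dense ((D'.map S.subtype : AddSubgroup G) : Set G) := by
    have := (hS.denseRange_val.dense_image continuous_subtype_val hD'd)
    rw [AddSubgroup.coe_map]; exact this
  have h1 : Determines (D'.map S.subtype) := hG _ hdense
  have h2 := (determines_iff (D'.map S.subtype) S hle hdense hS).mp h1
  have heq : (D'.map S.subtype).addSubgroupOf S = D' := by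
    show AddSubgroup.comap S.subtype (AddSubgroup.map S.subtype D') = D'
    exact AddSubgroup.comap_map_eq_self_of_injective (f := S.subtype) Subtype.coe_injective D'
  rw [heq] at h2
  exact h2.1
end
end

section
/- Every metrizable Abelian topological group is determined; that is, for every dense subgroup D of a metrizable Abelian topological group G, the restriction map Ĝ → D̂ is a topological isomorphism when both dual groups carry the compact-open topology. -/
open scoped Pointwise
noncomputable section

/-! ### Auxiliary material for the Aussenhofer–Chasco theorem -/

section AussenhoferChasco

open Filter Topology Set

/-- Dependent-choice style recursion along `ℕ`. -/
lemma acDepChoice {α : Type*} (P : ℕ → α → Prop) (R : ℕ → α → α → Prop) (a₀ : α)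
    (h₀ : P 0 a₀) (step : ∀ n a, P n a → ∃ b, P (n + 1) b ∧ R n a b) :
    ∃ f : ℕ → α, f 0 = a₀ ∧ (∀ n, P n (f n)) ∧ ∀ n, R n (f n) (f (n + 1)) := by
  classical
  let g : ∀ n : ℕ, {a : α // P n a} := fun n =>
    Nat.rec (motive := fun n => {a : α // P n a}) ⟨a₀, h₀⟩
      (fun n p => ⟨(step n p.1 p.2).choose, (step n p.1 p.2).choose_spec.1⟩) n
  exact ⟨fun n => (g n).1, rfl, fun n => (g n).2,
    fun n => (step n (g n).1 (g n).2).choose_spec.2⟩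

/-- Choice of an approximating series. -/
lemma acApprox {α : Type*} [AddCommGroup α] (S Fs : ℕ → Set α)
    (hstep : ∀ n, ∀ x ∈ S n, ∃ d ∈ Fs n, x - d ∈ S (n + 1)) {x₀ : α} (h₀ : x₀ ∈ S 0) :
    ∃ d : ℕ → α, (∀ n, d n ∈ Fs n) ∧
      ∀ n, x₀ - ∑ i ∈ Finset.range n, d i ∈ S n := by
  classical
  let g : ∀ n : ℕ, {y : α // y ∈ S n} := fun n =>
    Nat.rec (motive := fun n => {y : α // y ∈ S n}) ⟨x₀, h₀⟩
      (fun n p => ⟨p.1 - (hstep n p.1 p.2).choose,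
        (hstep n p.1 p.2).choose_spec.2⟩) n
  refine ⟨fun n => (hstep n (g n).1 (g n).2).choose,
    fun n => (hstep n (g n).1 (g n).2).choose_spec.1, fun n => ?_⟩
  have key : ∀ n, x₀ - ∑ i ∈ Finset.range n, (hstep i (g i).1 (g i).2).choose = (g n).1 := by
    intro n
    induction n with
    | zero => simp only [Finset.sum_range_zero, sub_zero]; rfl
    | succ n ih => rw [Finset.sum_range_succ, ← sub_sub, ih]
  rw [key n]
  exact (g n).2

/-- Norm of a real number of absolute value at most `1/2`, viewed in `ℝ/ℤ`. -/
lemma acNormCoe {r : ℝ} (hr : |r| ≤ 1 / 2) : ‖(r : Circ)‖ = |r| := by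
  have : ‖(r : AddCircle (1 : ℝ))‖ = |r - round r| := by
    rw [AddCircle.norm_eq]; norm_num
  rw [this]
  by_cases h : r = 1 / 2
  · subst h
    have : round ((1 : ℝ) / 2) = 1 := by
      rw [round_eq]; norm_num
    rw [this]; norm_num
  · have hlt : r < 1 / 2 := lt_of_le_of_ne (abs_le.mp hr).2 h
    have : round r = 0 := round_eq_zero_iff.mpr ⟨(abs_le.mp hr).1, hlt⟩
    rw [this]; norm_num

lemma acCoeIntCast (n : ℤ) : ((n : ℝ) : Circ) = 0 := by
  rw [QuotientAddGroup.eq_zero_iff]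
  exact AddSubgroup.intCast_mem_zmultiples_one (k := n)

/-- If all multiples `k • t`, `1 ≤ k ≤ N`, of an element `t` of `ℝ/ℤ` have norm at most `1/4`,
then `t` has norm at most `1/(4N)`. -/
lemma acCircDiv (t : Circ) (N : ℕ) (hN : 1 ≤ N)
    (h : ∀ k : ℕ, 1 ≤ k → k ≤ N → ‖(k • t : Circ)‖ ≤ 1 / 4) :
    ‖t‖ ≤ 1 / (4 * N) := by
  obtain ⟨x, rfl⟩ : ∃ x : ℝ, (x : Circ) = t := Quotient.exists_rep t
  set r : ℝ := x - round x with hrdef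
  have hxr : (x : Circ) = (r : Circ) := by
    have h1 : (x : Circ) - (r : Circ) = ((round x : ℝ) : Circ) := by
      rw [← QuotientAddGroup.mk_sub]
      congr 1
      simp [hrdef]
    have h0 : (x : Circ) - (r : Circ) = 0 := by rw [h1, acCoeIntCast]
    linear_combination (norm := abel) h0
  rw [hxr] at h ⊢
  have habs : |r| ≤ 1 / 2 := abs_sub_round x
  have hsmul : ∀ k : ℕ, ((k : ℕ) • (r : Circ)) = (((k : ℝ) * r : ℝ) : Circ) := by
    intro k
    rw [← nsmul_eq_mul, ← QuotientAddGroup.mk_nsmul]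
  have hr4 : |r| ≤ 1 / 4 := by
    have := h 1 le_rfl hN
    rwa [one_smul, acNormCoe habs] at this
  -- all multiples up to N have norm `k * |r|`
  have key : ∀ k : ℕ, 1 ≤ k → k ≤ N → ‖(k • (r : Circ))‖ = k * |r| := by
    intro k hk1 hkN
    induction k with
    | zero => omega
    | succ k ih =>
      by_cases hk0 : k = 0
      · subst hk0
        simp [acNormCoe habs]
      · have hk1' : 1 ≤ k := by omega
        have hkN' : k ≤ N := by omega
        have hknorm := ih hk1' hkN'
        have hkle : (k : ℝ) * |r| ≤ 1 / 4 := by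
          rw [← hknorm]; exact h k hk1' hkN'
        have habs' : |((k : ℝ) + 1) * r| ≤ 1 / 2 := by
          rw [abs_mul]
          have : |(k : ℝ) + 1| = (k : ℝ) + 1 := abs_of_pos (by positivity)
          rw [this]
          nlinarith [abs_nonneg r]
        rw [hsmul (k + 1)]
        push_cast
        rw [acNormCoe habs', abs_mul]
        have : |(k : ℝ) + 1| = (k : ℝ) + 1 := abs_of_pos (by positivity)
        rw [this]
  -- conclude
  have hNnorm : (N : ℝ) * |r| ≤ 1 / 4 := by
    rw [← key N hN le_rfl]
    exact h N hN le_rfl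
  have hNpos : (0 : ℝ) < N := by exact_mod_cast hN
  rw [acNormCoe habs, le_div_iff₀ (by positivity : (0 : ℝ) < 4 * N)]
  nlinarith

variable {G : Type*} [AddCommGroup G] [TopologicalSpace G] [IsTopologicalAddGroup G]

lemma acSubsetAddSelf {V : Set G} (h0 : (0 : G) ∈ V) : V ⊆ V + V := fun x hx => by
  have := Set.add_mem_add h0 hx
  simpa using this

/-- A nice symmetric open neighbourhood basis at `0` in a first countable group. -/
lemma acExistsBasis [FirstCountableTopology G] :
    ∃ U : ℕ → Set G, (∀ n, IsOpen (U n)) ∧ (∀ n, (0 : G) ∈ U n) ∧ (∀ n, U n = -U n) ∧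
      (∀ n, U (n + 1) + U (n + 1) ⊆ U n) ∧ ∀ V ∈ 𝓝 (0 : G), ∃ n, U n ⊆ V := by
  obtain ⟨B, hB⟩ := (𝓝 (0 : G)).exists_antitone_basis
  have key : ∀ W ∈ 𝓝 (0 : G), ∃ V : Set G,
      (IsOpen V ∧ (0 : G) ∈ V ∧ V = -V) ∧ V + V ⊆ W := by
    intro W hW
    obtain ⟨V, hVo, hV0, hVW⟩ := exists_open_nhds_zero_add_subset hW
    refine ⟨V ∩ -V, ⟨hVo.inter hVo.neg, ⟨hV0, by simpa using hV0⟩, ?_⟩, ?_⟩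
    · ext z
      simp only [Set.mem_inter_iff, Set.mem_neg, neg_neg]
      tauto
    · exact (Set.add_subset_add Set.inter_subset_left Set.inter_subset_left).trans hVW
  have hBmem : ∀ n, B n ∈ 𝓝 (0 : G) := fun n => hB.1.mem_of_mem trivial
  obtain ⟨U, hU0eq, hUP, hUR⟩ := acDepChoice
    (P := fun n V => (IsOpen V ∧ (0 : G) ∈ V ∧ V = -V) ∧ V ⊆ B n)
    (R := fun _ V V' => V' + V' ⊆ V)
    (a₀ := (key (B 0) (hBmem 0)).choose)
    (by
      obtain ⟨h1, h2⟩ := (key (B 0) (hBmem 0)).choose_spec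
      exact ⟨h1, (acSubsetAddSelf h1.2.1).trans h2⟩)
    (by
      intro n V hV
      have hVmem : V ∈ 𝓝 (0 : G) := hV.1.1.mem_nhds hV.1.2.1
      obtain ⟨V', hV', hV'sub⟩ := key (V ∩ B (n + 1)) (Filter.inter_mem hVmem (hBmem (n + 1)))
      refine ⟨V', ⟨hV', ?_⟩, ?_⟩
      · exact (acSubsetAddSelf hV'.2.1).trans (hV'sub.trans Set.inter_subset_right)
      · exact hV'sub.trans Set.inter_subset_left)
  refine ⟨U, fun n => (hUP n).1.1, fun n => (hUP n).1.2.1, fun n => (hUP n).1.2.2,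
    hUR, fun V hV => ?_⟩
  obtain ⟨n, -, hn⟩ := hB.1.mem_iff.mp hV
  exact ⟨n, (hUP n).2.trans hn⟩

lemma acClosureSubset {V : Set G} (hV : V ∈ 𝓝 (0 : G)) (hsym : V = -V) :
    closure V ⊆ V + V := by
  intro x hx
  have h0 : (0 : G) ∈ interior V := mem_interior_iff_mem_nhds.mpr hV
  have hox : x ∈ x +ᵥ interior V := ⟨0, h0, add_zero x⟩
  obtain ⟨y, hy, hyV⟩ := mem_closure_iff.mp hx _ (isOpen_interior.vadd x) hox
  obtain ⟨w, hw, hwx⟩ := hy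
  have hnw : -w ∈ V := by
    rw [hsym]
    exact Set.neg_mem_neg.mpr (interior_subset hw)
  exact ⟨y, hyV, -w, hnw, by rw [← hwx]; simp only [vadd_eq_add]; abel⟩

lemma acNsmulMem (U : ℕ → Set G) (h0 : ∀ n, (0 : G) ∈ U n)
    (hch : ∀ n, U (n + 1) + U (n + 1) ⊆ U n) :
    ∀ i j k, k ≤ 2 ^ i → ∀ a ∈ U (j + i), k • a ∈ U j := by
  intro i
  induction i with
  | zero =>
    intro j k hk a ha
    have hk' : k = 0 ∨ k = 1 := by
      rw [pow_zero] at hk; omega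
    rcases hk' with rfl | rfl
    · simpa using h0 j
    · simpa using ha
  | succ i ih =>
    intro j k hk a ha
    obtain ⟨mm, hmm⟩ : ∃ mm, 2 ^ i = mm := ⟨_, rfl⟩
    have h2 : (2 : ℕ) ^ (i + 1) = mm + mm := by rw [pow_succ, hmm]; ring
    rw [h2] at hk
    have hk1 : k / 2 ≤ 2 ^ i := by omega
    have hk2 : k - k / 2 ≤ 2 ^ i := by omega
    have hsum : k / 2 + (k - k / 2) = k := by omega
    have ha' : a ∈ U (j + 1 + i) := by rwa [show j + 1 + i = j + (i + 1) by omega]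
    have h1 := ih (j + 1) (k / 2) hk1 a ha'
    have h2' := ih (j + 1) (k - k / 2) hk2 a ha'
    have heq : k • a = (k / 2) • a + (k - k / 2) • a := by rw [← add_nsmul, hsum]
    rw [heq]
    exact hch j (Set.add_mem_add h1 h2')

lemma acCompactUnion (M : ℕ → Set G) (hfin : ∀ n, (M n).Finite)
    (hsm : ∀ V ∈ 𝓝 (0 : G), ∃ N, ∀ n, N ≤ n → M n ⊆ V) :
    IsCompact (insert (0 : G) (⋃ n, M n)) := by
  classical
  refine isCompact_of_finite_subcover ?_
  intro ι C hC hcov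
  have h0 : (0 : G) ∈ ⋃ i, C i := hcov (Set.mem_insert _ _)
  rw [Set.mem_iUnion] at h0
  obtain ⟨i₀, hi₀⟩ := h0
  obtain ⟨N, hN⟩ := hsm (C i₀) ((hC i₀).mem_nhds hi₀)
  have hSfin : (⋃ n ∈ Finset.range N, M n).Finite :=
    Set.Finite.biUnion (Finset.range N).finite_toSet fun n _ => hfin n
  have hsub : (⋃ n ∈ Finset.range N, M n) ⊆ ⋃ i, C i := by
    intro x hx
    apply hcov
    right
    simp only [Set.mem_iUnion] at hx ⊢
    obtain ⟨n, _, hn⟩ := hx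
    exact ⟨n, hn⟩
  obtain ⟨t, ht⟩ := hSfin.isCompact.elim_finite_subcover C hC hsub
  refine ⟨insert i₀ t, fun x hx => ?_⟩
  rcases hx with rfl | hx
  · exact Set.mem_biUnion (Finset.mem_insert_self _ _) hi₀
  · rw [Set.mem_iUnion] at hx
    obtain ⟨n, hn⟩ := hx
    by_cases h : n < N
    · have hx' := ht (Set.mem_biUnion (Finset.mem_range.mpr h) hn)
      rw [Set.mem_iUnion₂] at hx'
      obtain ⟨i, hi, hxi⟩ := hx'
      exact Set.mem_biUnion (Finset.mem_insert_of_mem hi) hxi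
    · exact Set.mem_biUnion (Finset.mem_insert_self i₀ t) (hN n (le_of_not_gt h) hn)

/-- The key combinatorial lemma: a compact set of characters controlling a compact
subset of `G`. -/
lemma acKey [FirstCountableTopology G]
    (D : AddSubgroup G) (hD : Dense (D : Set G)) {K : Set G} (hK : IsCompact K) (m : ℕ) :
    ∃ F : Set G, F ⊆ (D : Set G) ∧ IsCompact F ∧
      ∀ ψ : ContinuousAddMonoidHom G Circ, (∀ y ∈ F, ‖ψ y‖ ≤ 1 / 4) →
        ∀ x ∈ K, ‖ψ x‖ ≤ (1 / 2 : ℝ) ^ (m + 1) := by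
  classical
  obtain ⟨U, hUo, hU0, hUsym, hUch, hUbasis⟩ := acExistsBasis (G := G)
  have hUstep : ∀ n, U (n + 1) ⊆ U n := fun n =>
    (acSubsetAddSelf (hU0 (n + 1))).trans (hUch n)
  have hUmono : Antitone U := antitone_nat_of_succ_le hUstep
  have hUnhds : ∀ n, U n ∈ 𝓝 (0 : G) := fun n => (hUo n).mem_nhds (hU0 n)
  -- recursive construction of compact sets `Kn` and finite approximating sets `Fn ⊆ D`
  have hstep : ∀ n (p : Set G × Set G),
      (IsCompact p.1 ∧ (n ≠ 0 → p.1 ⊆ U (2 * n + m + 2))) →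
      ∃ q : Set G × Set G,
        (IsCompact q.1 ∧ (n + 1 ≠ 0 → q.1 ⊆ U (2 * (n + 1) + m + 2))) ∧
        (q.2.Finite ∧ q.2 ⊆ (D : Set G) ∧ (n ≠ 0 → q.2 ⊆ U (2 * n + m + 1)) ∧
          ∀ x ∈ p.1, ∃ d ∈ q.2, x - d ∈ q.1) := by
    intro n p hp
    set V : Set G := U (2 * n + m + 5) with hVdef
    have hVnhds : V ∈ 𝓝 (0 : G) := hUnhds _
    have hVsym : V = -V := hUsym _
    -- the covering of `p.1` by translates of `V` centred at points of `D`
    have hcov : p.1 ⊆ ⋃ d : ↥((D : Set G) ∩ (p.1 + V)), ((d : G) +ᵥ V) := by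
      intro x hx
      have hxo : IsOpen (x +ᵥ V) := (hUo _).vadd x
      have hxne : (x +ᵥ V).Nonempty := ⟨x, 0, hU0 _, add_zero x⟩
      obtain ⟨d, hdD, hdV⟩ := hD.exists_mem_open hxo hxne
      obtain ⟨v, hv, hvx⟩ := hdV
      have hnv : -v ∈ V := by rw [hVsym]; exact Set.neg_mem_neg.mpr hv
      have hdmem : d ∈ (D : Set G) ∩ (p.1 + V) :=
        ⟨hdD, ⟨x, hx, v, hv, hvx⟩⟩
      refine Set.mem_iUnion.mpr ⟨⟨d, hdmem⟩, ⟨-v, hnv, ?_⟩⟩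
      show d + -v = x
      rw [← hvx]; simp only [vadd_eq_add]; abel
    obtain ⟨t, ht⟩ := hp.1.elim_finite_subcover _ (fun d => (hUo _).vadd _) hcov
    set Fn : Set G := Subtype.val '' (t : Set ↥((D : Set G) ∩ (p.1 + V))) with hFndef
    set K' : Set G := (⋃ d ∈ Fn, (fun y => y - d) '' p.1) ∩ closure V with hK'def
    have hFnfin : Fn.Finite := (t.finite_toSet).image _
    refine ⟨(K', Fn), ⟨?_, fun _ => ?_⟩, hFnfin, ?_, ?_, ?_⟩
    · refine IsCompact.inter_right ?_ isClosed_closure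
      exact hFnfin.isCompact_biUnion fun d _ =>
        hp.1.image (continuous_id.sub continuous_const)
    · -- K' ⊆ U (2(n+1)+m+2)
      have h1 : closure V ⊆ V + V := acClosureSubset hVnhds hVsym
      have h2 : V + V ⊆ U (2 * n + m + 4) := by
        have := hUch (2 * n + m + 4)
        intro z hz
        apply this
        have hVsub : V ⊆ U (2 * n + m + 5) := subset_rfl
        exact hz
      intro z hz
      have : z ∈ closure V := hz.2
      have hz2 : z ∈ U (2 * n + m + 4) := h2 (h1 this)
      rwa [show 2 * (n + 1) + m + 2 = 2 * n + m + 4 by omega]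
    · -- Fn ⊆ D
      rintro d ⟨⟨d', hd'⟩, -, rfl⟩
      exact hd'.1
    · -- Fn small
      intro hn
      rintro d ⟨⟨d', hd'⟩, -, rfl⟩
      have hd2 : d' ∈ p.1 + V := hd'.2
      have hp2 : p.1 ⊆ U (2 * n + m + 2) := hp.2 hn
      have : d' ∈ U (2 * n + m + 2) + U (2 * n + m + 2) := by
        obtain ⟨a, ha, b, hb, hab⟩ := hd2
        exact ⟨a, hp2 ha, b, hUmono (by omega) hb, hab⟩
      exact hUch (2 * n + m + 1) this
    · -- covering property
      intro x hx
      have hx' := ht hx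
      rw [Set.mem_iUnion₂] at hx'
      obtain ⟨d, hdt, hxd⟩ := hx'
      obtain ⟨v, hv, hvx⟩ := hxd
      refine ⟨(d : G), ⟨d, hdt, rfl⟩, ?_, ?_⟩
      · exact Set.mem_biUnion ⟨d, hdt, rfl⟩ ⟨x, hx, rfl⟩
      · apply subset_closure
        have : x - (d : G) = v := by rw [← hvx]; simp only [vadd_eq_add]; abel
        rwa [this]
  obtain ⟨f, hf0, hfP, hfR⟩ := acDepChoice
    (P := fun n (p : Set G × Set G) => IsCompact p.1 ∧ (n ≠ 0 → p.1 ⊆ U (2 * n + m + 2)))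
    (R := fun n p q => q.2.Finite ∧ q.2 ⊆ (D : Set G) ∧
      (n ≠ 0 → q.2 ⊆ U (2 * n + m + 1)) ∧ ∀ x ∈ p.1, ∃ d ∈ q.2, x - d ∈ q.1)
    (a₀ := (K, (∅ : Set G))) ⟨hK, fun h => absurd rfl h⟩ hstep
  set Kn : ℕ → Set G := fun n => (f n).1 with hKndef
  set Fn : ℕ → Set G := fun n => (f (n + 1)).2 with hFndef
  set M : ℕ → Set G := fun n =>
    (fun pr : ℕ × G => pr.1 • pr.2) '' (Set.Icc 1 (2 ^ (n + m)) ×ˢ Fn n) with hMdef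
  set F : Set G := insert (0 : G) (⋃ n, M n) with hFdef
  have hMfin : ∀ n, (M n).Finite := fun n =>
    ((Set.finite_Icc 1 (2 ^ (n + m))).prod (hfR n).1).image _
  have hMD : ∀ n, M n ⊆ (D : Set G) := by
    rintro n y ⟨⟨k, d⟩, ⟨-, hd⟩, rfl⟩
    exact AddSubgroup.nsmul_mem D ((hfR n).2.1 hd) k
  have hMsmall : ∀ V ∈ 𝓝 (0 : G), ∃ N, ∀ n, N ≤ n → M n ⊆ V := by
    intro V hV
    obtain ⟨j, hj⟩ := hUbasis V hV
    refine ⟨j + 1, fun n hn => ?_⟩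
    rintro y ⟨⟨k, d⟩, ⟨hk, hd⟩, rfl⟩
    have hn0 : n ≠ 0 := by omega
    have hdU : d ∈ U (2 * n + m + 1) := (hfR n).2.2.1 hn0 hd
    have hdU' : d ∈ U ((n + 1) + (n + m)) := by
      rwa [show (n + 1) + (n + m) = 2 * n + m + 1 by omega]
    have := acNsmulMem U hU0 hUch (n + m) (n + 1) k hk.2 d hdU'
    exact hj (hUmono (by omega) this)
  refine ⟨F, ?_, ?_, ?_⟩
  · -- F ⊆ D
    rintro y (rfl | hy)
    · exact zero_mem D
    · rw [Set.mem_iUnion] at hy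
      obtain ⟨n, hn⟩ := hy
      exact hMD n hn
  · exact acCompactUnion M hMfin hMsmall
  · intro ψ hψ x hx
    -- small values on the Fn
    have hsmall : ∀ n, ∀ d ∈ Fn n, ‖ψ d‖ ≤ (1 / 4 : ℝ) * (1 / 2) ^ (n + m) := by
      intro n d hd
      have hb := acCircDiv (ψ d) (2 ^ (n + m)) Nat.one_le_two_pow ?_
      · calc ‖ψ d‖ ≤ 1 / (4 * (2 ^ (n + m) : ℕ)) := hb
          _ = (1 / 4 : ℝ) * (1 / 2) ^ (n + m) := by
            rw [one_div_pow 2 (n+m)]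
            push_cast
            rw [one_div_mul_one_div]
      · intro k hk1 hk2
        rw [← map_nsmul]
        apply hψ
        right
        rw [Set.mem_iUnion]
        exact ⟨n, ⟨(k, d), ⟨⟨hk1, hk2⟩, hd⟩, rfl⟩⟩
    -- the approximating series for x
    have hx0 : x ∈ Kn 0 := by
      show x ∈ (f 0).1
      rw [hf0]
      exact hx
    obtain ⟨d, hdF, hdsum⟩ := acApprox Kn Fn (fun n => (hfR n).2.2.2) hx0
    set s : ℕ → G := fun n => ∑ i ∈ Finset.range n, d i with hsdef
    have hxs : Tendsto (fun n => x - s n) atTop (𝓝 (0 : G)) := by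
      rw [tendsto_def]
      intro V hV
      obtain ⟨j, hj⟩ := hUbasis V hV
      rw [Filter.mem_atTop_sets]
      refine ⟨j + 1, fun n hn => ?_⟩
      have hn0 : n ≠ 0 := by omega
      have h1 : x - s n ∈ Kn n := hdsum n
      have h2 : Kn n ⊆ U (2 * n + m + 2) := (hfP n).2 hn0
      exact hj (hUmono (by omega) (h2 h1))
    have hst : Tendsto s atTop (𝓝 x) := by
      have h2 := hxs.const_sub x
      simp only [sub_sub_cancel, sub_zero] at h2
      exact h2
    have hψt : Tendsto (fun n => ψ (s n)) atTop (𝓝 (ψ x)) :=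
      ((map_continuous ψ).tendsto x).comp hst
    have hnt : Tendsto (fun n => ‖ψ (s n)‖) atTop (𝓝 ‖ψ x‖) :=
      (continuous_norm.tendsto _).comp hψt
    refine le_of_tendsto hnt (Filter.Eventually.of_forall fun n => ?_)
    calc ‖ψ (s n)‖ = ‖∑ i ∈ Finset.range n, ψ (d i)‖ := by rw [hsdef, map_sum]
      _ ≤ ∑ i ∈ Finset.range n, ‖ψ (d i)‖ := norm_sum_le _ _
      _ ≤ ∑ i ∈ Finset.range n, (1 / 4 : ℝ) * (1 / 2) ^ (i + m) :=
        Finset.sum_le_sum fun i _ => hsmall i (d i) (hdF i)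
      _ = (1 / 4 : ℝ) * (1 / 2) ^ m * ∑ i ∈ Finset.range n, (1 / 2 : ℝ) ^ i := by
        rw [Finset.mul_sum]
        refine Finset.sum_congr rfl fun i _ => ?_
        rw [pow_add]
        ring
      _ ≤ (1 / 4 : ℝ) * (1 / 2) ^ m * 2 := by
        have h2 := sum_geometric_two_le n
        have hpos : (0 : ℝ) ≤ (1 / 4 : ℝ) * (1 / 2) ^ m := by positivity
        exact mul_le_mul_of_nonneg_left h2 hpos
      _ = (1 / 2 : ℝ) ^ (m + 1) := by rw [pow_succ]; ring

/-- Pointwise difference of two continuous characters. -/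
def acSub {A : Type*} [AddCommGroup A] [TopologicalSpace A]
    (f g : ContinuousAddMonoidHom A Circ) : ContinuousAddMonoidHom A Circ :=
  ⟨f.toAddMonoidHom - g.toAddMonoidHom, (map_continuous f).sub (map_continuous g)⟩

@[simp] lemma acSub_apply {A : Type*} [AddCommGroup A] [TopologicalSpace A]
    (f g : ContinuousAddMonoidHom A Circ) (a : A) : acSub f g a = f a - g a := rfl

lemma acResCharInjective (D : AddSubgroup G) (hD : Dense (D : Set G)) :
    Function.Injective (resChar D) := by
  intro ψ₁ ψ₂ h
  have heq : Set.EqOn (⇑ψ₁) (⇑ψ₂) (D : Set G) := fun y hy =>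
    DFunLike.congr_fun h (⟨y, hy⟩ : ↥D)
  have := Continuous.ext_on hD (map_continuous ψ₁) (map_continuous ψ₂) heq
  ext x
  exact congrFun this x

set_option maxHeartbeats 1000000 in
lemma acResCharSurjective (D : AddSubgroup G) (hD : Dense (D : Set G))
    (χ : ContinuousAddMonoidHom ↥D Circ) :
    ∃ ψ : ContinuousAddMonoidHom G Circ, resChar D ψ = χ := by
  letI : UniformSpace G := IsTopologicalAddGroup.rightUniformSpace G
  haveI : IsUniformAddGroup G := isUniformAddGroup_of_addCommGroup
  have hui : IsUniformInducing ((↑) : ↥D → G) :=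
    isUniformEmbedding_subtype_val.isUniformInducing
  have hdr : DenseRange ((↑) : ↥D → G) := by
    show Dense (Set.range _)
    rw [Subtype.range_coe_subtype]
    exact hD
  have huc : UniformContinuous (⇑χ : ↥D → Circ) :=
    uniformContinuous_addMonoidHom_of_continuous (map_continuous χ)
  set ψ₀ : G → Circ := (hui.isDenseInducing hdr).extend (⇑χ) with hψ₀def
  have hcont : Continuous ψ₀ :=
    (uniformContinuous_uniformly_extend hui hdr huc).continuous
  have heq : ∀ y : ↥D, ψ₀ (y : G) = χ y := fun y =>
    uniformly_extend_of_ind hui hdr huc y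
  have hadd : ∀ a b : G, ψ₀ (a + b) = ψ₀ a + ψ₀ b := by
    have hcl : IsClosed {p : G × G | ψ₀ (p.1 + p.2) = ψ₀ p.1 + ψ₀ p.2} :=
      isClosed_eq (hcont.comp continuous_add)
        ((hcont.comp continuous_fst).add (hcont.comp continuous_snd))
    have hsub : ((D : Set G) ×ˢ (D : Set G)) ⊆
        {p : G × G | ψ₀ (p.1 + p.2) = ψ₀ p.1 + ψ₀ p.2} := by
      rintro ⟨a, b⟩ ⟨ha, hb⟩
      show ψ₀ (a + b) = ψ₀ a + ψ₀ b
      have h3 : ψ₀ (a + b) = χ (⟨a, ha⟩ + ⟨b, hb⟩) := heq ⟨a + b, add_mem ha hb⟩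
      rw [h3, map_add, heq ⟨a, ha⟩, heq ⟨b, hb⟩]
    have hdense : Dense ((D : Set G) ×ˢ (D : Set G)) := hD.prod hD
    have huniv : Set.univ ⊆ {p : G × G | ψ₀ (p.1 + p.2) = ψ₀ p.1 + ψ₀ p.2} := by
      rw [← hdense.closure_eq]
      exact closure_minimal hsub hcl
    intro a b
    exact huniv (Set.mem_univ (a, b))
  have hzero : ψ₀ 0 = 0 := by
    have := heq 0
    simpa using this
  refine ⟨⟨⟨⟨ψ₀, hzero⟩, fun a b => hadd a b⟩, hcont⟩, ?_⟩
  ext y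
  exact heq y

end AussenhoferChasco

section MainTheorem

open Filter Topology Set

/-- Every metrizable abelian topological group is determined. -/
theorem statement2 {G : Type*} [AddCommGroup G] [TopologicalSpace G] [IsTopologicalAddGroup G]
    [TopologicalSpace.MetrizableSpace G] :
    DeterminedGrp G := by
  classical
  intro D hD
  choose ext hext using fun χ => acResCharSurjective D hD χ
  have hinj := acResCharInjective D hD
  have hleft : ∀ ψ, ext (resChar D ψ) = ψ := fun ψ => hinj (hext _)
  have hcont_res : Continuous (resChar D) :=
    ContinuousAddMonoidHom.continuous_comp_left (inclHom D)
  have hcont_ext : Continuous ext := by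
    rw [continuous_iff_continuousAt]
    intro χ
    have hind := ContinuousAddMonoidHom.isInducing_toContinuousMap G Circ
    rw [ContinuousAt, hind.tendsto_nhds_iff]
    rw [ContinuousMap.tendsto_iff_forall_isCompact_tendstoUniformlyOn]
    intro K hK
    rw [Metric.tendstoUniformlyOn_iff]
    intro ε hε
    obtain ⟨m, hm⟩ : ∃ m : ℕ, (1 / 2 : ℝ) ^ (m + 1) < ε := by
      obtain ⟨n, hn⟩ := exists_pow_lt_of_lt_one hε (by norm_num : (1 / 2 : ℝ) < 1)
      refine ⟨n, lt_of_le_of_lt ?_ hn⟩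
      exact pow_le_pow_of_le_one (by norm_num) (by norm_num) (Nat.le_succ n)
    obtain ⟨F, hFD, hFc, hFkey⟩ := acKey D hD hK m
    have hFc' : IsCompact ((Subtype.val : ↥D → G) ⁻¹' F) := by
      apply (Topology.IsEmbedding.subtypeVal).toIsInducing.isCompact_preimage'
      · exact hFc
      · rw [Subtype.range_coe_subtype]
        exact hFD
    have hev : ∀ᶠ χ' in 𝓝 χ, ∀ y : ↥D, (y : G) ∈ F → dist (χ y) (χ' y) < 1 / 4 := by
      have h1 : Filter.Tendsto (fun χ' : ContinuousAddMonoidHom ↥D Circ =>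
          χ'.toContinuousMap) (𝓝 χ) (𝓝 χ.toContinuousMap) :=
        ((ContinuousAddMonoidHom.isInducing_toContinuousMap ↥D Circ).continuous).tendsto χ
      have h2 := ContinuousMap.tendsto_iff_forall_isCompact_tendstoUniformlyOn.mp h1 _ hFc'
      rw [Metric.tendstoUniformlyOn_iff] at h2
      filter_upwards [h2 (1 / 4) (by norm_num)] with χ' h' y hy
      exact h' y hy
    filter_upwards [hev] with χ' hχ' x hx
    have hsm : ∀ y ∈ F, ‖(acSub (ext χ') (ext χ)) y‖ ≤ 1 / 4 := by
      intro y hy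
      have hyD : y ∈ D := hFD hy
      have e1 : ext χ' y = χ' ⟨y, hyD⟩ := DFunLike.congr_fun (hext χ') ⟨y, hyD⟩
      have e2 : ext χ y = χ ⟨y, hyD⟩ := DFunLike.congr_fun (hext χ) ⟨y, hyD⟩
      rw [acSub_apply, e1, e2, ← dist_eq_norm]
      rw [dist_comm]
      exact le_of_lt (hχ' ⟨y, hyD⟩ hy)
    have hb := hFkey _ hsm x hx
    rw [acSub_apply] at hb
    calc dist (ext χ x) (ext χ' x) = ‖ext χ' x - ext χ x‖ := by
          rw [dist_comm, dist_eq_norm]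
      _ ≤ (1 / 2 : ℝ) ^ (m + 1) := hb
      _ < ε := hm
  let e : ContinuousAddMonoidHom G Circ ≃ₜ ContinuousAddMonoidHom ↥D Circ :=
    { toFun := resChar D
      invFun := ext
      left_inv := hleft
      right_inv := hext
      continuous_toFun := hcont_res
      continuous_invFun := hcont_ext }
  exact e.isHomeomorph

end MainTheorem
end
end

section
/- Let {G_i : i ∈ I} be a family of compact Hausdorff Abelian groups and let G = ∏_i G_i. Then the direct sum ⊕_i G_i (elements of finite support) is a dense subgroup of G which determines G. -/
open scoped Pointwise
noncomputable section

open Topology Filter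

lemma circ_zero_of_small (t : Circ) (h : ∀ n : ℕ, ‖(n • t : Circ)‖ < 1/4) : t = 0 := by
  obtain ⟨x, rfl⟩ := QuotientAddGroup.mk_surjective t
  set r : ℝ := x - round x with hr
  have hround : (((round x : ℝ) : Circ)) = 0 := by
    rw [AddCircle.coe_eq_zero_iff]
    exact ⟨round x, by simp⟩
  have hmk : ((r : ℝ) : Circ) = ((x : ℝ) : Circ) := by
    rw [hr, AddCircle.coe_sub, hround, sub_zero]
  have hnorm : ‖((x : ℝ) : Circ)‖ = |r| := by
    rw [AddCircle.norm_eq]; simp [hr]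
  by_contra ht
  have ha0 : 0 < |r| := by
    rw [← hnorm]; exact norm_pos_iff.mpr ht
  have ha1 : |r| < 1/4 := by
    have := h 1
    simpa [hnorm] using this
  set a := |r|
  have hP : ∃ n : ℕ, 1/4 ≤ n * a := by
    obtain ⟨n, hn⟩ := exists_nat_ge ((1/4) / a)
    exact ⟨n, (div_le_iff₀ ha0).mp hn⟩
  classical
  let n := Nat.find hP
  have hn : 1/4 ≤ n * a := Nat.find_spec hP
  have hn0 : n ≠ 0 := by
    intro h0
    rw [h0] at hn; norm_num at hn
  have hprev : ¬ (1/4 ≤ (n - 1 : ℕ) * a) := Nat.find_min hP (Nat.sub_lt (Nat.pos_of_ne_zero hn0) one_pos)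
  push_neg at hprev
  have hna : n * a < 1/2 := by
    have : ((n : ℝ)) * a = ((n - 1 : ℕ) : ℝ) * a + a := by
      have : ((n - 1 : ℕ) : ℝ) = (n : ℝ) - 1 := by
        rw [Nat.cast_sub (Nat.one_le_iff_ne_zero.mpr hn0)]; norm_num
      rw [this]; ring
    rw [this]; linarith
  have hsm : (n • ((x : ℝ) : Circ)) = ((n * r : ℝ) : Circ) := by
    rw [← hmk, ← AddCircle.coe_nsmul, nsmul_eq_mul]
  have habs : |n * r| = n * a := by
    rw [abs_mul, abs_of_nonneg (by positivity : (0:ℝ) ≤ (n:ℝ))]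
  have hnormn : ‖((n * r : ℝ) : Circ)‖ = |n * r| := by
    rw [AddCircle.norm_coe_eq_abs_iff (1:ℝ) one_ne_zero]
    rw [habs]; rw [abs_one]; linarith
  have := h n
  rw [hsm, hnormn, habs] at this
  linarith

lemma addHom_zero_of_small {A : Type*} [AddCommGroup A] (f : A →+ Circ)
    (h : ∀ a, ‖f a‖ < 1/4) (a : A) : f a = 0 :=
  circ_zero_of_small (f a) (fun n => by rw [← map_nsmul]; exact h _)

lemma dual_discrete_of_compact_small {A : Type*} [AddCommGroup A] [TopologicalSpace A]
    [IsTopologicalAddGroup A] (K : Set A) (hK : IsCompact K)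
    (hv : ∀ f : ContinuousAddMonoidHom A Circ, (∀ x ∈ K, ‖f x‖ < 1/4) → f = 0) :
    DiscreteTopology (ContinuousAddMonoidHom A Circ) := by
  rw [discreteTopology_iff_isOpen_singleton_zero]
  have hEq : ({0} : Set (ContinuousAddMonoidHom A Circ)) =
      (ContinuousAddMonoidHom.toContinuousMap) ⁻¹'
        {f : C(A, Circ) | Set.MapsTo f K (Metric.ball 0 (1/4))} := by
    ext f
    simp only [Set.mem_singleton_iff, Set.mem_preimage, Set.mem_setOf_eq]
    constructor
    · rintro rfl x _
      have h0 : ((0 : ContinuousAddMonoidHom A Circ).toContinuousMap) x = 0 := rfl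
      simp only [Metric.mem_ball, h0, dist_zero_right, norm_zero]
      norm_num
    · intro hf
      apply hv
      intro x hx
      have := hf hx
      simpa [Metric.mem_ball, dist_eq_norm] using this
  rw [hEq]
  exact (ContinuousMap.isOpen_setOf_mapsTo hK Metric.isOpen_ball).preimage
    (ContinuousAddMonoidHom.isInducing_toContinuousMap A Circ).continuous


/-- For a family of compact Hausdorff abelian groups, the direct sum `⊕ᵢ Gᵢ` (elements of
finite support) is a dense subgroup of `∏ᵢ Gᵢ` which determines `∏ᵢ Gᵢ`. -/
theorem statement12 {ι : Type*} {G : ι → Type*} [∀ i, AddCommGroup (G i)]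
    [∀ i, TopologicalSpace (G i)] [∀ i, IsTopologicalAddGroup (G i)] [∀ i, CompactSpace (G i)]
    [∀ i, T2Space (G i)] :
    Dense ((directSum (fun i => (⊤ : AddSubgroup (G i))) : AddSubgroup (∀ i, G i)) :
        Set (∀ i, G i)) ∧
      Determines (directSum (fun i => (⊤ : AddSubgroup (G i)))) := by
  
  classical
  set D := directSum (fun i => (⊤ : AddSubgroup (G i))) with hDdef
  have memD : ∀ x : ∀ i, G i, ({i | x i ≠ 0}.Finite) → x ∈ D := fun x hx =>
    ⟨fun i => trivial, hx⟩
  -- density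
  have hdense : Dense ((D : AddSubgroup (∀ i, G i)) : Set (∀ i, G i)) := by
    rw [dense_iff_inter_open]
    rintro U hU ⟨x, hx⟩
    obtain ⟨I, u, hu, hsub⟩ := isOpen_pi_iff.mp hU x hx
    refine ⟨fun i => if i ∈ I then x i else 0, hsub fun i hi => ?_, ?_⟩
    · show (if i ∈ I then x i else 0) ∈ u i
      rw [if_pos (Finset.mem_coe.mp hi)]
      exact (hu i hi).2
    · exact memD _ ((I.finite_toSet).subset fun i hi => by
        by_contra h
        exact hi (if_neg h))
  -- single elements
  have hsingmem : ∀ (i : ι) (g : G i), Pi.single i g ∈ D := fun i g =>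
    memD _ ((Set.finite_singleton i).subset fun j hj => by
      by_contra h
      exact hj (Pi.single_eq_of_ne (by simpa using h) g))
  have hsingcont : ∀ i : ι, Continuous fun g : G i => (⟨Pi.single i g, hsingmem i g⟩ : ↥D) := by
    intro i
    refine Continuous.subtype_mk (continuous_pi fun j => ?_) _
    by_cases h : j = i
    · subst h
      simpa only [Pi.single_eq_same] using continuous_id'
    · simp only [Pi.single_eq_of_ne h]
      exact continuous_const
  let singD : ∀ i : ι, ContinuousAddMonoidHom (G i) ↥D := fun i =>
    ⟨{ toFun := fun g => ⟨Pi.single i g, hsingmem i g⟩,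
       map_zero' := Subtype.ext (by simp),
       map_add' := fun a b => Subtype.ext (by simp [Pi.single_add]) }, hsingcont i⟩
  -- decomposition of elements of D as finite sums of singles
  have hdecomp : ∀ (d : ↥D) (u : Finset ι), {i | (d : ∀ i, G i) i ≠ 0} ⊆ ↑u →
      d = ∑ i ∈ u, (singD i) ((d : ∀ i, G i) i) := by
    intro d u hu
    apply Subtype.ext
    rw [AddSubmonoidClass.coe_finset_sum]
    funext j
    rw [Finset.sum_apply]
    simp only [show ∀ c : ι, (((singD c) ((d : ∀ i, G i) c) : ↥D) : ∀ i, G i) =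
      Pi.single c ((d : ∀ i, G i) c) from fun c => rfl]
    by_cases hj : j ∈ u
    · rw [Finset.sum_eq_single_of_mem j hj]
      · exact (Pi.single_eq_same j _).symm
      · intro i _ hij
        exact Pi.single_eq_of_ne hij.symm _
    · rw [Finset.sum_eq_zero
        (fun i hi => Pi.single_eq_of_ne (fun hji : j = i => hj (hji ▸ hi)) _)]
      by_contra h
      exact hj (hu h)
  -- discreteness of the dual of the product
  haveI hdisc1 : DiscreteTopology (ContinuousAddMonoidHom (∀ i, G i) Circ) := by
    refine dual_discrete_of_compact_small Set.univ isCompact_univ ?_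
    intro f hf
    ext a
    exact addHom_zero_of_small f.toAddMonoidHom (fun a => hf a trivial) a
  -- discreteness of the dual of D
  haveI hdisc2 : DiscreteTopology (ContinuousAddMonoidHom ↥D Circ) := by
    set K₀ : Set (∀ i, G i) := {x | ∀ i j, i ≠ j → x i = 0 ∨ x j = 0} with hK₀def
    have hK₀closed : IsClosed K₀ := by
      have hcompl : K₀ᶜ = ⋃ (i) (j) (_ : i ≠ j),
          ({x : ∀ i, G i | x i ≠ 0} ∩ {x | x j ≠ 0}) := by
        ext x
        simp [hK₀def, not_or, Set.mem_iUnion]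
        tauto
      rw [← isOpen_compl_iff, hcompl]
      refine isOpen_iUnion fun i => isOpen_iUnion fun j => isOpen_iUnion fun _ =>
        IsOpen.inter ?_ ?_ <;>
        exact isOpen_compl_iff.mpr (isClosed_singleton.preimage (continuous_apply _))
    have hK₀sub : K₀ ⊆ (D : Set (∀ i, G i)) := by
      intro x hx
      refine memD x (Set.Subsingleton.finite ?_)
      intro i hi j hj
      by_contra hij
      rcases hx i j hij with h | h
      · exact hi h
      · exact hj h
    set K' : Set ↥D := Subtype.val ⁻¹' K₀ with hK'def
    have hK'cpt : IsCompact K' := by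
      rw [Topology.IsEmbedding.subtypeVal.isCompact_iff]
      have : Subtype.val '' K' = K₀ := by
        rw [hK'def, Set.image_preimage_eq_inter_range, Subtype.range_coe]
        exact Set.inter_eq_self_of_subset_left hK₀sub
      rw [this]
      exact hK₀closed.isCompact
    refine dual_discrete_of_compact_small K' hK'cpt ?_
    intro f hf
    have hsingK : ∀ (i : ι) (g : G i), (singD i) g ∈ K' := by
      intro i g a b hab
      by_cases ha : a = i
      · subst ha
        right
        exact Pi.single_eq_of_ne (fun h => hab h.symm) g
      · left
        exact Pi.single_eq_of_ne ha g
    have hφ : ∀ (i : ι) (g : G i), f ((singD i) g) = 0 := by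
      intro i
      exact addHom_zero_of_small (f.toAddMonoidHom.comp (singD i).toAddMonoidHom)
        (fun g => hf _ (hsingK i g))
    ext d
    have hd2 : {i | (d : ∀ i, G i) i ≠ 0}.Finite := d.2.2
    rw [hdecomp d hd2.toFinset (by simp), map_sum]
    exact Finset.sum_eq_zero fun i _ => hφ i _
  -- injectivity
  have hinj : Function.Injective (resChar D) := by
    intro f g hfg
    have heqon : Set.EqOn ⇑f ⇑g ((D : AddSubgroup (∀ i, G i)) : Set (∀ i, G i)) := by
      intro x hx
      exact DFunLike.congr_fun hfg (⟨x, hx⟩ : ↥D)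
    exact DFunLike.coe_injective
      (Continuous.ext_on hdense (map_continuous f) (map_continuous g) heqon)
  -- surjectivity
  have hsurj : Function.Surjective (resChar D) := by
    intro χ
    have hball : χ ⁻¹' (Metric.ball (0 : Circ) (1/4)) ∈ 𝓝 (0 : ↥D) := by
      have h0 : χ (0 : ↥D) = 0 := map_zero χ
      have := (map_continuous χ).continuousAt (x := (0 : ↥D))
      exact this.preimage_mem_nhds (by rw [h0]; exact Metric.ball_mem_nhds _ (by norm_num))
    rw [nhds_subtype_eq_comap, Filter.mem_comap] at hball
    obtain ⟨U, hU, hUsub⟩ := hball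
    rw [nhds_pi, Filter.mem_pi'] at hU
    obtain ⟨F, t, ht, hpi⟩ := hU
    have hzero : ∀ i ∉ F, ∀ g : G i, χ ((singD i) g) = 0 := by
      intro i hi
      refine addHom_zero_of_small (χ.toAddMonoidHom.comp (singD i).toAddMonoidHom) ?_
      intro g
      have hmem : ((singD i) g : ∀ j, G j) ∈ Set.pi ↑F t := by
        intro j hj
        have hji : j ≠ i := fun h => hi (h ▸ hj)
        rw [show ((singD i) g : ∀ j, G j) j = Pi.single i g j from rfl,
          Pi.single_eq_of_ne hji]
        exact mem_of_mem_nhds (ht j)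
      have := hUsub (hpi hmem)
      simpa [Metric.mem_ball, dist_eq_norm] using this
    let χ0 : (∀ i, G i) →+ Circ :=
      { toFun := fun x => Finset.sum F (fun i => χ ((singD i) (x i)))
        map_zero' := by simp
        map_add' := fun a b => by
          simp only [Pi.add_apply, map_add]
          exact Finset.sum_add_distrib }
    refine ⟨⟨χ0, continuous_finset_sum _ fun i _ =>
      (map_continuous χ).comp ((map_continuous (singD i)).comp (continuous_apply i))⟩, ?_⟩
    ext d
    have hd2 : {i | (d : ∀ i, G i) i ≠ 0}.Finite := d.2.2
    have hdec := hdecomp d (hd2.toFinset ∪ F) (by simp [Finset.coe_union])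
    show ∑ i ∈ F, χ ((singD i) ((d : ∀ i, G i) i)) = χ d
    rw [Finset.sum_subset (Finset.subset_union_right (s₁ := hd2.toFinset))]
    · conv_rhs => rw [hdec]
      rw [map_sum]
    · intro i _ hiF
      exact hzero i hiF _
  refine ⟨hdense, ?_⟩
  exact ⟨continuous_of_discreteTopology, fun s _ => isOpen_discrete _, hinj, hsurj⟩
end
end

section
/- Every torsion Abelian topological group of bounded order has the cofinally zero property: if n·x = 0 for all x ∈ G, then for every compact K ⊆ G there is a compact F ⊆ G such that every continuous character h with |h(x)| < 1/4 on F vanishes identically on K. -/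
open scoped Pointwise
noncomputable section

private lemma double_norm' (s : Circ) (hs : ‖s‖ < 1/4) : ‖(2 : ℕ) • s‖ = 2 * ‖s‖ := by
  induction s using QuotientAddGroup.induction_on with | H r => ?_
  set x : ℝ := r - round r with hx
  have hcoe : ((x : ℝ) : Circ) = QuotientAddGroup.mk r := by
    rw [hx]
    simp only [QuotientAddGroup.mk_sub]
    rw [sub_eq_self, QuotientAddGroup.eq_zero_iff]
    exact AddSubgroup.intCast_mem_zmultiples_one _
  have hnorm : ‖(QuotientAddGroup.mk r : Circ)‖ = |x| := by
    rw [← hcoe, AddCircle.norm_coe_eq_abs_iff (1:ℝ) one_ne_zero]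
    simp only [abs_one]
    calc |x| = |r - round r| := rfl
    _ ≤ 1/2 := by simpa using abs_sub_round r
  rw [hnorm] at hs ⊢
  have h2 : (2:ℕ) • (QuotientAddGroup.mk r : Circ) = ((2*x : ℝ) : Circ) := by
    rw [← hcoe, two_smul, two_mul]
    norm_cast
  rw [h2, (AddCircle.norm_coe_eq_abs_iff (1:ℝ) one_ne_zero).2
    (by rw [abs_mul]; simp; linarith [abs_nonneg x]), abs_mul]
  simp

private lemma torsion_small' (n : ℕ) (hn : 0 < n) (t : Circ) (ht : n • t = 0)
    (h : ∀ k, k < n → ‖k • t‖ < 1/4) : t = 0 := by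
  have hall : ∀ k : ℕ, ‖k • t‖ < 1/4 := by
    intro k
    have hz : (n * (k / n)) • t = 0 := by
      rw [mul_nsmul, ht, smul_zero]
    have hk : k • t = (k % n) • t := by
      conv_lhs => rw [← Nat.mod_add_div k n]
      rw [add_smul, hz, add_zero]
    rw [hk]
    exact h _ (Nat.mod_lt _ hn)
  have pow2 : ∀ j : ℕ, ‖(2^j : ℕ) • t‖ = 2^j * ‖t‖ := by
    intro j
    induction j with
    | zero => simp
    | succ j ih =>
      have : (2^(j+1) : ℕ) • t = (2:ℕ) • ((2^j : ℕ) • t) := by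
        rw [← mul_nsmul, pow_succ, mul_comm]
      have hs : ‖(2^j : ℕ) • t‖ < 1/4 := hall _
      rw [this, double_norm' _ hs, ih, pow_succ]
      ring
  have hnt : ‖t‖ = 0 := by
    by_contra hne
    have hpos : 0 < ‖t‖ := lt_of_le_of_ne (norm_nonneg t) (Ne.symm hne)
    obtain ⟨j, hj⟩ := pow_unbounded_of_one_lt ((1/4)/‖t‖) (one_lt_two (α := ℝ))
    have h1 := hall (2^j)
    rw [pow2 j] at h1
    rw [div_lt_iff₀ hpos] at hj
    linarith
  exact norm_eq_zero.mp hnt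

/-- Every torsion abelian topological group of bounded order has the cofinally zero
property. -/
theorem statement13 {G : Type*} [AddCommGroup G] [TopologicalSpace G] [IsTopologicalAddGroup G]
    (n : ℕ) (hn : 0 < n) (hbd : ∀ x : G, n • x = 0) :
    CofinallyZero G := by
  intro K hK
  refine ⟨⋃ k ∈ Finset.range n, (fun x => k • x) '' K, ?_, ?_⟩
  · refine (Finset.range n).finite_toSet.isCompact_biUnion fun k _ => hK.image ?_
    exact continuous_nsmul k
  · intro h hsmall x hx
    apply torsion_small' n hn (h x)
    · rw [← map_nsmul, hbd, map_zero]
    · intro k hk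
      rw [← map_nsmul]
      exact hsmall _ (Set.mem_biUnion (Finset.mem_coe.mpr (Finset.mem_range.mpr hk)) ⟨x, hx, rfl⟩)
end
end

section
/- The image of a compact determined Abelian group under a continuous surjective homomorphism onto a Hausdorff topological Abelian group is determined. -/
open scoped Pointwise
open Topology
noncomputable section

/-- Precomposition with a continuous surjection from a compact space is inducing
for the compact-open topology. -/
lemma isInducing_precomp_of_surj {X Y Z : Type*} [TopologicalSpace X] [TopologicalSpace Y]
    [TopologicalSpace Z] [CompactSpace X] [T2Space Y] (f : C(X, Y))
    (hsurj : Function.Surjective f) :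
    IsInducing (fun g : C(Y, Z) => g.comp f) := by
  constructor
  refine le_antisymm (continuous_iff_le_induced.mp (ContinuousMap.continuous_precomp f)) ?_
  rw [ContinuousMap.compactOpen_eq]
  refine le_generateFrom ?_
  rintro s ⟨K, hK, U, hU, rfl⟩
  rw [isOpen_induced_iff]
  refine ⟨{g : C(X, Z) | Set.MapsTo g (f ⁻¹' K) U},
    ContinuousMap.isOpen_setOf_mapsTo ((hK.isClosed.preimage f.continuous).isCompact) hU, ?_⟩
  ext g
  simp only [Set.mem_preimage, Set.mem_setOf_eq]
  constructor
  · intro h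
    have : Set.MapsTo g (f '' (f ⁻¹' K)) U := by
      rw [Set.mapsTo_image_iff]; exact h
    rwa [Set.image_preimage_eq K hsurj] at this
  · intro h x hx
    exact h hx

/-- The image of a compact determined abelian group under a continuous surjective
homomorphism onto a Hausdorff topological abelian group is determined. -/
theorem statement14 {G H : Type*} [AddCommGroup G] [TopologicalSpace G] [IsTopologicalAddGroup G]
    [CompactSpace G] [T2Space G] [AddCommGroup H] [TopologicalSpace H] [IsTopologicalAddGroup H]
    [T2Space H] (hG : DeterminedGrp G) (f : G →+ H) (hf : Continuous f)
    (hsurj : Function.Surjective f) :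
    DeterminedGrp H := by
  intro D hD
  classical
  -- the preimage subgroup
  set E : AddSubgroup G := D.comap f with hEdef
  have hmemE : ∀ x : G, x ∈ E ↔ f x ∈ D := fun x => AddSubgroup.mem_comap
  have hker : ∀ x : G, f x = 0 → x ∈ E := fun x hx =>
    (hmemE x).mpr (by rw [hx]; exact D.zero_mem)
  -- f is a closed map and a quotient map
  have hclosed : IsClosedMap f := hf.isClosedMap
  have hquot : IsQuotientMap f := hclosed.isQuotientMap hf hsurj
  -- E is dense in G
  have hEdense : Dense (E : Set G) := by
    set C : AddSubgroup G := E.topologicalClosure with hCdef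
    have hCcoe : (C : Set G) = closure (E : Set G) := AddSubgroup.topologicalClosure_coe
    have hCclosed : IsClosed (C : Set G) := E.isClosed_topologicalClosure
    have himg : IsClosed (f '' (C : Set G)) := hclosed _ hCclosed
    have hDsub : (D : Set H) ⊆ f '' (C : Set G) := by
      intro d hd
      obtain ⟨g, hg⟩ := hsurj d
      exact ⟨g, E.le_topologicalClosure ((hmemE g).mpr (hg ▸ hd)), hg⟩
    have huniv : f '' (C : Set G) = Set.univ := by
      apply Set.eq_univ_of_univ_subset
      calc Set.univ = closure (D : Set H) := hD.closure_eq.symm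
        _ ⊆ closure (f '' (C : Set G)) := closure_mono hDsub
        _ = f '' (C : Set G) := himg.closure_eq
    have hCuniv : ∀ g : G, g ∈ C := by
      intro g
      have : f g ∈ f '' (C : Set G) := huniv ▸ Set.mem_univ _
      obtain ⟨c, hc, hfc⟩ := this
      have hsub : g - c ∈ E := hker _ (by rw [map_sub, hfc, sub_self])
      have : c + (g - c) ∈ C := C.add_mem hc (E.le_topologicalClosure hsub)
      simpa using this
    intro g
    rw [← hCcoe]
    exact hCuniv g
  -- determinedness of E
  have hdetE : IsHomeomorph (resChar E) := hG E hEdense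
  let homeoE := hdetE.homeomorph (resChar E)
  -- the restriction of f to E → D
  let fD : ContinuousAddMonoidHom E D :=
    { toFun := fun e => ⟨f e.1, (hmemE e.1).mp e.2⟩
      map_zero' := by ext; simp
      map_add' := fun a b => by ext; simp
      continuous_toFun := Continuous.subtype_mk (hf.comp continuous_subtype_val) _ }
  let fHom : ContinuousAddMonoidHom G H := ⟨f, hf⟩
  let fC : C(G, H) := ⟨f, hf⟩
  let g0 : H → G := Function.surjInv hsurj
  have hg0 : ∀ h, f (g0 h) = h := Function.surjInv_eq hsurj
  let Ψ : ContinuousAddMonoidHom D Circ → ContinuousAddMonoidHom E Circ := fun χ => χ.comp fD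
  let σ0 : ContinuousAddMonoidHom D Circ → ContinuousAddMonoidHom G Circ :=
    fun χ => homeoE.symm (Ψ χ)
  have hσ0 : ∀ χ, resChar E (σ0 χ) = Ψ χ := by
    intro χ
    have := homeoE.apply_symm_apply (Ψ χ)
    rwa [show ∀ y, homeoE y = resChar E y from fun _ => rfl] at this
  have hkill : ∀ (χ) (a b : G), f a = f b → σ0 χ a = σ0 χ b := by
    intro χ a b hab
    have hsub : a - b ∈ E := hker _ (by rw [map_sub, hab, sub_self])
    have h2 := congrArg (fun ψ : ContinuousAddMonoidHom E Circ => ψ ⟨a - b, hsub⟩) (hσ0 χ)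
    have h3 : σ0 χ (a - b) = χ (fD ⟨a - b, hsub⟩) := h2
    have h4 : fD (⟨a - b, hsub⟩ : E) = 0 := by
      ext
      show f (a - b) = 0
      rw [map_sub, hab, sub_self]
    have h5 : σ0 χ (a - b) = 0 := by rw [h3, h4, map_zero]
    have := sub_eq_zero.mp (by rwa [map_sub] at h5)
    exact this
  -- the extension map
  let ext : ContinuousAddMonoidHom D Circ → ContinuousAddMonoidHom H Circ := fun χ =>
    { toFun := fun h => σ0 χ (g0 h)
      map_zero' := by
        show σ0 χ (g0 0) = 0
        have h1 : f (g0 0) = f 0 := by rw [hg0, map_zero]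
        rw [hkill χ _ _ h1, map_zero]
      map_add' := fun a b => by
        show σ0 χ (g0 (a + b)) = σ0 χ (g0 a) + σ0 χ (g0 b)
        have h1 : f (g0 (a + b)) = f (g0 a + g0 b) := by
          rw [map_add, hg0, hg0, hg0]
        rw [hkill χ _ _ h1, map_add]
      continuous_toFun := by
        rw [hquot.continuous_iff]
        have : (fun h => σ0 χ (g0 h)) ∘ f = ⇑(σ0 χ) :=
          funext fun x => hkill χ _ _ (hg0 (f x))
        rw [this]
        exact (σ0 χ).continuous }
  have hres : ∀ χ, resChar D (ext χ) = χ := by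
    intro χ
    ext d
    have hmem : g0 d.1 ∈ E := (hmemE _).mpr (by rw [hg0]; exact d.2)
    have h2 := congrArg (fun ψ : ContinuousAddMonoidHom E Circ => ψ ⟨g0 d.1, hmem⟩) (hσ0 χ)
    have h3 : σ0 χ (g0 d.1) = χ (fD ⟨g0 d.1, hmem⟩) := h2
    have h4 : fD (⟨g0 d.1, hmem⟩ : E) = d := Subtype.ext (hg0 d.1)
    calc resChar D (ext χ) d = σ0 χ (g0 d.1) := rfl
      _ = χ (fD ⟨g0 d.1, hmem⟩) := h3
      _ = χ d := by rw [h4]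
  -- injectivity of restriction
  have hinj : Function.Injective (resChar D) := by
    intro χ₁ χ₂ hχ
    have heqon : Set.EqOn ⇑χ₁ ⇑χ₂ (D : Set H) := fun d hd =>
      congrArg (fun ψ : ContinuousAddMonoidHom D Circ => ψ ⟨d, hd⟩) hχ
    ext x
    exact congrFun (Continuous.ext_on hD χ₁.continuous χ₂.continuous heqon) x
  have hleft : Function.LeftInverse ext (resChar D) := fun χ => hinj (hres _)
  -- inducing of composition with f on characters
  have hindC : IsInducing (fun χ : ContinuousAddMonoidHom H Circ => χ.comp fHom) := by
    have h1 : IsInducing ((fun g : C(H, Circ) => g.comp fC) ∘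
        (ContinuousAddMonoidHom.toContinuousMap (A := H) (B := Circ))) :=
      (isInducing_precomp_of_surj fC hsurj).comp
        (ContinuousAddMonoidHom.isInducing_toContinuousMap H Circ)
    have heq : ((ContinuousAddMonoidHom.toContinuousMap (A := G) (B := Circ)) ∘
        (fun χ : ContinuousAddMonoidHom H Circ => χ.comp fHom)) =
        ((fun g : C(H, Circ) => g.comp fC) ∘
        (ContinuousAddMonoidHom.toContinuousMap (A := H) (B := Circ))) := by
      funext χ
      ext x
      rfl
    have h2 : IsInducing ((ContinuousAddMonoidHom.toContinuousMap (A := G) (B := Circ)) ∘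
        (fun χ : ContinuousAddMonoidHom H Circ => χ.comp fHom)) := heq ▸ h1
    exact ((ContinuousAddMonoidHom.isInducing_toContinuousMap G Circ).of_comp_iff).mp h2
  -- continuity of the extension map
  have hcontExt : Continuous ext := by
    rw [hindC.continuous_iff]
    have heq2 : (fun χ : ContinuousAddMonoidHom H Circ => χ.comp fHom) ∘ ext =
        (homeoE.symm : ContinuousAddMonoidHom E Circ → ContinuousAddMonoidHom G Circ) ∘ Ψ := by
      funext χ
      show (ext χ).comp fHom = σ0 χ
      ext x
      exact hkill χ _ _ (hg0 (f x))
    rw [heq2]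
    exact homeoE.symm.continuous.comp (ContinuousAddMonoidHom.continuous_comp_left fD)
  exact isHomeomorph_iff_exists_inverse.mpr
    ⟨ContinuousAddMonoidHom.continuous_comp_left (inclHom D), ext, hleft, hres, hcontExt⟩
end
end

section
/- Let G be an infinite Abelian group. Then G# (G with the Bohr topology of the discrete group G_d) is a dense subgroup of the Bohr compactification b(G_d) which does not determine b(G_d). -/
open scoped Pointwise
noncomputable section

/-! ### Auxiliary machinery for `statement16` -/

section Aux

open Filter MeasureTheory Topology


lemma circ_exists_rep (y : Circ) : ∃ x : ℝ, (x : Circ) = y ∧ |x| = ‖y‖ := by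
  obtain ⟨x₀, rfl⟩ := QuotientAddGroup.mk_surjective y
  refine ⟨x₀ - round x₀, ?_, ?_⟩
  · rw [QuotientAddGroup.mk_sub]
    have : ((round x₀ : ℝ) : Circ) = 0 := by
      rw [AddCircle.coe_eq_zero_iff]
      exact ⟨round x₀, by simp⟩
    rw [this, sub_zero]
  · have h := AddCircle.norm_eq (p := (1:ℝ)) (x := x₀)
    simp only [inv_one, one_mul, mul_one] at h
    rw [h]

lemma circ_norm_coe_le {x : ℝ} (hx : |x| ≤ 1/2) : ‖(x : Circ)‖ = |x| :=
  (AddCircle.norm_coe_eq_abs_iff (1:ℝ) one_ne_zero).2 (by rwa [abs_one])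

lemma circ_double {y : Circ} (h : ‖y‖ < 1/4) : ‖y + y‖ = 2 * ‖y‖ := by
  obtain ⟨x, rfl, hx⟩ := circ_exists_rep y
  have habs : |x + x| ≤ 1/2 := by
    have : |x + x| ≤ |x| + |x| := abs_add_le x x
    rw [hx] at this; linarith
  have hxx : ((x + x : ℝ) : Circ) = (x:Circ) + (x:Circ) := by rw [QuotientAddGroup.mk_add]
  rw [← hxx, circ_norm_coe_le habs, ← hx, ← two_mul, abs_mul]
  norm_num

lemma circ_small_zero {y : Circ} (h : ∀ n : ℕ, ‖(2^n : ℕ) • y‖ < 1/4) : y = 0 := by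
  have key : ∀ n : ℕ, ‖(2^n : ℕ) • y‖ = 2^n * ‖y‖ := by
    intro n
    induction n with
    | zero => simp
    | succ n ih =>
      have h2 : (2^(n+1) : ℕ) • y = (2^n : ℕ) • y + (2^n : ℕ) • y := by
        rw [← add_nsmul]; ring_nf
      rw [h2, circ_double (h n), ih]
      ring
  by_contra hy
  have hpos : 0 < ‖y‖ := norm_pos_iff.2 hy
  obtain ⟨n, hn⟩ := pow_unbounded_of_one_lt ((1/4)/‖y‖) (by norm_num : (1:ℝ) < 2)
  have := h n
  rw [key n] at this
  have : (1/4)/‖y‖ < 2^n := hn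
  rw [div_lt_iff₀ hpos] at this
  linarith [h n, key n]

section
variable {X : Type*} [TopologicalSpace X] [AddCommGroup X]

lemma hom_small_eq_zero (h : X →+ Circ) (hs : ∀ x : X, ‖h x‖ < 1/4) : ∀ x, h x = 0 := by
  intro x
  apply circ_small_zero
  intro n
  rw [← map_nsmul]
  exact hs _

lemma isOpen_zero_dual_of_compact [CompactSpace X] :
    IsOpen {(0 : ContinuousAddMonoidHom X Circ)} := by
  rw [(ContinuousAddMonoidHom.isInducing_toContinuousMap X Circ).isOpen_iff]
  refine ⟨{f : C(X, Circ) | Set.MapsTo f Set.univ (Metric.ball (0:Circ) (1/4))}, 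
    ContinuousMap.isOpen_setOf_mapsTo isCompact_univ Metric.isOpen_ball, ?_⟩
  ext h
  simp only [Set.mem_preimage, Set.mem_setOf_eq, Set.mem_singleton_iff]
  constructor
  · intro hm
    ext x
    exact hom_small_eq_zero h.toAddMonoidHom
      (fun x => by simpa [mem_ball_zero_iff] using hm (Set.mem_univ x)) x
  · rintro rfl
    intro x _
    rw [mem_ball_zero_iff]
    have h00 : ‖(0:Circ)‖ < 1/4 := by rw [norm_zero]; norm_num
    exact h00

/-- From an open `{0}` in the dual, extract a single compact/ε pair. -/
lemma exists_compact_eps_of_isOpen_zero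
    (hop : IsOpen {(0 : ContinuousAddMonoidHom X Circ)}) :
    ∃ (K : Set X) (ε : ℝ), IsCompact K ∧ 0 < ε ∧
      ∀ f : ContinuousAddMonoidHom X Circ, (∀ x ∈ K, ‖f x‖ < ε) → f = 0 := by
  rw [(ContinuousAddMonoidHom.isInducing_toContinuousMap X Circ).isOpen_iff] at hop
  obtain ⟨O, hO, hpre⟩ := hop
  have h0 : (0 : ContinuousAddMonoidHom X Circ).toContinuousMap ∈ O := by
    have : (0 : ContinuousAddMonoidHom X Circ) ∈ ({0} : Set _) := rfl
    rw [← hpre] at this; exact this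
  obtain ⟨v, hv, h0v, hvO⟩ :=
    (TopologicalSpace.isTopologicalBasis_of_subbasis
      (ContinuousMap.compactOpen_eq (X := X) (Y := Circ))).exists_subset_of_mem_open h0 hO
  obtain ⟨fam, ⟨hfin, hsub⟩, rfl⟩ := hv
  -- build (K, ε) by induction on the finite family
  have main : ∀ (fam : Set (Set C(X, Circ))), fam.Finite →
      (fam ⊆ Set.image2 (fun K U => {f : C(X,Circ) | Set.MapsTo f K U}) {K | IsCompact K} {U | IsOpen U}) →
      (0 : C(X, Circ)) ∈ ⋂₀ fam →
      ∃ (K : Set X) (ε : ℝ), IsCompact K ∧ 0 < ε ∧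
        {f : C(X,Circ) | ∀ x ∈ K, ‖f x‖ < ε} ⊆ ⋂₀ fam := by
    intro fam hfin
    refine Set.Finite.induction_on fam hfin ?_ ?_
    · intro _ _
      exact ⟨∅, 1, isCompact_empty, one_pos, by simp⟩
    · rintro m fam hm hfam ih hsub h0m
      rw [Set.sInter_insert] at h0m ⊢
      obtain ⟨h0m1, h0m2⟩ := h0m
      obtain ⟨K1, ε1, hK1, hε1, hsub1⟩ := ih (fun s hs => hsub (Set.mem_insert_of_mem _ hs)) h0m2
      obtain ⟨Km, hKm, Um, hUm, rfl⟩ := hsub (Set.mem_insert _ _)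
      rcases Set.eq_empty_or_nonempty Km with hKe | ⟨x₀, hx₀⟩
      · exact ⟨K1, ε1, hK1, hε1, fun f hf => ⟨by simp [hKe, Set.MapsTo], hsub1 hf⟩⟩
      · have h0U : (0 : Circ) ∈ Um := h0m1 hx₀
        obtain ⟨εm, hεm, hball⟩ := Metric.isOpen_iff.1 (show IsOpen Um from hUm) 0 h0U
        refine ⟨Km ∪ K1, min εm ε1, (show IsCompact Km from hKm).union hK1, lt_min hεm hε1, fun f hf => ⟨?_, ?_⟩⟩
        · intro x hx
          apply hball
          rw [mem_ball_zero_iff]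
          exact lt_of_lt_of_le (hf x (Set.mem_union_left _ hx)) (min_le_left _ _)
        · exact hsub1 fun x hx => lt_of_lt_of_le (hf x (Set.mem_union_right _ hx)) (min_le_right _ _)
  obtain ⟨K, ε, hK, hε, hss⟩ := main fam hfin hsub h0v
  refine ⟨K, ε, hK, hε, fun f hf => ?_⟩
  have : f.toContinuousMap ∈ O := hvO (hss hf)
  have : f ∈ ({0} : Set _) := by rw [← hpre]; exact this
  exact this
end

/-- The group of all homomorphisms `G → Circ` as a subgroup of the product. -/
def homSub (G : Type*) [AddCommGroup G] : AddSubgroup (G → Circ) where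
  carrier := {f | ∀ a b, f (a + b) = f a + f b}
  zero_mem' := by intro a b; simp
  add_mem' := by
    intro f g hf hg a b
    simp only [Pi.add_apply, hf a b, hg a b]
    abel
  neg_mem' := by
    intro f hf a b
    simp only [Pi.neg_apply, hf a b]
    abel

/-- A member of `homSub G` as a bundled hom. -/
def homSub.toHom {G : Type*} [AddCommGroup G] (χ : ↥(homSub G)) : G →+ Circ :=
  AddMonoidHom.mk' (χ : G → Circ) (fun a b => χ.2 a b)

lemma isClosed_homSub (G : Type*) [AddCommGroup G] :
    IsClosed ((homSub G : Set (G → Circ))) := by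
  have : (homSub G : Set (G → Circ)) = ⋂ (a) (b), {f : G → Circ | f (a+b) = f a + f b} := by
    ext f
    simp [homSub, Set.mem_iInter, AddSubgroup.mem_carrier]
  rw [this]
  exact isClosed_iInter fun a => isClosed_iInter fun b =>
    isClosed_eq (continuous_apply _) ((continuous_apply a).add (continuous_apply b))

instance (G : Type*) [AddCommGroup G] : CompactSpace ↥(homSub G) :=
  isCompact_iff_compactSpace.mp ((isClosed_homSub G).isCompact)

/-- The embedding of the rational circle into the real circle. -/
def ratToCirc : AddCircle (1 : ℚ) →+ Circ :=
  QuotientAddGroup.map _ _ (Rat.castHom ℝ).toAddMonoidHom (by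
    rintro x ⟨n, rfl⟩
    refine ⟨n, ?_⟩
    push_cast
    simp)

lemma ratToCirc_injective : Function.Injective ratToCirc := by
  intro a b h
  obtain ⟨x, rfl⟩ := QuotientAddGroup.mk_surjective a
  obtain ⟨y, rfl⟩ := QuotientAddGroup.mk_surjective b
  rw [ratToCirc] at h
  rw [QuotientAddGroup.map_mk, QuotientAddGroup.map_mk] at h
  rw [QuotientAddGroup.eq_iff_sub_mem] at h ⊢
  obtain ⟨n, hn⟩ := h
  refine ⟨n, ?_⟩
  have hn' : (n : ℝ) = (x:ℝ) - (y:ℝ) := by simpa [zsmul_eq_mul] using hn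
  have hq : (n : ℚ) = x - y := by exact_mod_cast hn'
  simp [zsmul_eq_mul, hq]

lemma exists_hom_ne_zero {G : Type*} [AddCommGroup G] {a : G} (ha : a ≠ 0) :
    ∃ χ : G →+ Circ, χ a ≠ 0 := by
  obtain ⟨c, hc⟩ := CharacterModule.exists_character_apply_ne_zero_of_ne_zero ha
  refine ⟨ratToCirc.comp (show G →+ AddCircle (1:ℚ) from c), fun h => hc ?_⟩
  have h0 : ratToCirc ((show G →+ AddCircle (1:ℚ) from c) a) = ratToCirc 0 := by
    rw [map_zero]; exact h
  exact ratToCirc_injective h0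

/-- `G` with the Bohr topology (of the discrete topology) has no nontrivial
convergent sequences. -/
lemma no_conv_seq {G : Type*} [AddCommGroup G] (t : ℕ → G) (ht0 : ∀ k, t k ≠ 0)
    (hconv : ∀ χ : ↥(homSub G), Tendsto (fun k => (χ : G → Circ) (t k)) atTop (𝓝 0)) :
    False := by
  classical
  letI : MeasurableSpace ↥(homSub G) := borel _
  haveI : BorelSpace ↥(homSub G) := ⟨rfl⟩
  haveI : Nonempty ↥(homSub G) := ⟨0⟩
  set K₀ : TopologicalSpace.PositiveCompacts ↥(homSub G) := ⊤ with hK₀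
  set μ : Measure ↥(homSub G) := MeasureTheory.Measure.addHaarMeasure K₀ with hμ
  have hμuniv : μ Set.univ = 1 := by
    have := MeasureTheory.Measure.addHaarMeasure_self (K₀ := K₀)
    rwa [TopologicalSpace.PositiveCompacts.coe_top] at this
  haveI : IsFiniteMeasure μ := ⟨by rw [hμuniv]; exact ENNReal.one_lt_top⟩
  set F : ℕ → ↥(homSub G) → ℂ := fun k χ => ((AddCircle.toCircle ((χ : G → Circ) (t k)) : Circle) : ℂ)
    with hF
  have Fcont : ∀ k, Continuous (F k) := by
    intro k
    exact continuous_subtype_val.comp (AddCircle.continuous_toCircle.comp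
      ((continuous_apply (t k)).comp continuous_subtype_val))
  -- orthogonality
  have orth : ∀ k, ∫ χ, F k χ ∂μ = 0 := by
    intro k
    obtain ⟨χ₀h, hχ₀⟩ := exists_hom_ne_zero (ht0 k)
    set χ₀ : ↥(homSub G) := ⟨(χ₀h : G → Circ), fun a b => map_add χ₀h a b⟩ with hχ₀def
    set c : ℂ := ((AddCircle.toCircle (χ₀h (t k)) : Circle) : ℂ) with hc
    have hcne : c ≠ 1 := by
      intro h1
      apply hχ₀
      have : AddCircle.toCircle (χ₀h (t k)) = AddCircle.toCircle (0 : Circ) := by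
        rw [AddCircle.toCircle_zero]
        refine Circle.coe_injective ?_
        rw [Circle.coe_one, ← hc]
        exact h1
      exact AddCircle.injective_toCircle one_ne_zero this
    have hinv := MeasureTheory.integral_add_left_eq_self (μ := μ) (F k) χ₀
    have hpt : ∀ χ : ↥(homSub G), F k (χ₀ + χ) = c * F k χ := by
      intro χ
      have hadd : ((χ₀ + χ : ↥(homSub G)) : G → Circ) (t k)
          = χ₀h (t k) + (χ : G → Circ) (t k) := rfl
      rw [hF]
      simp only [hadd, AddCircle.toCircle_add, Circle.coe_mul, hc]
    rw [funext hpt] at hinv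
    · rw [MeasureTheory.integral_const_mul] at hinv
      by_contra hne
      exact hcne ((mul_left_eq_self₀.mp hinv).resolve_right hne)
  -- dominated convergence
  have dct := MeasureTheory.tendsto_integral_of_dominated_convergence
    (F := F) (f := fun _ => (1:ℂ)) (bound := fun _ => (1:ℝ)) (μ := μ)
    (fun k => (Fcont k).aestronglyMeasurable)
    (MeasureTheory.integrable_const 1)
    (fun k => Filter.Eventually.of_forall (fun χ => by
      rw [hF]
      simp [Circle.norm_coe]))
    (Filter.Eventually.of_forall (fun χ => by
      have h1 : Tendsto (fun k => AddCircle.toCircle ((χ : G → Circ) (t k))) atTop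
          (𝓝 (AddCircle.toCircle (0:Circ))) :=
        (AddCircle.continuous_toCircle.tendsto _).comp (hconv χ)
      have h2 : Tendsto (fun k => ((AddCircle.toCircle ((χ : G → Circ) (t k)) : Circle) : ℂ))
          atTop (𝓝 ((AddCircle.toCircle (0:Circ) : Circle) : ℂ)) :=
        (continuous_subtype_val.tendsto _).comp h1
      rw [AddCircle.toCircle_zero, Circle.coe_one] at h2
      exact h2))
  simp only [orth] at dct
  have hcontr := tendsto_nhds_unique dct tendsto_const_nhds
  rw [MeasureTheory.integral_const, MeasureTheory.measureReal_def, hμuniv] at hcontr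
  simp at hcontr
lemma core_infinite {G : Type*} [AddCommGroup G] (S : Set G) (hS : S.Infinite)
    (hA : IsCompact ((fun g => (fun χ : ↥(homSub G) => (χ : G → Circ) g)) '' S)) : False := by
  classical
  set A : Set (↥(homSub G) → Circ) :=
    (fun g => (fun χ : ↥(homSub G) => (χ : G → Circ) g)) '' S with hAdef
  set s : ℕ → G := fun n => ((Set.Infinite.natEmbedding S hS) n : G) with hsdef
  have hsS : ∀ n, s n ∈ S := fun n => ((Set.Infinite.natEmbedding S hS) n).2
  have hsinj : Function.Injective s :=
    Subtype.val_injective.comp (Set.Infinite.natEmbedding S hS).injective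
  set ρ : ↥(homSub G) → (ℕ → Circ) := fun χ n => (χ : G → Circ) (s n) with hρdef
  have hρcont : Continuous ρ :=
    continuous_pi fun n => (continuous_apply (s n)).comp continuous_subtype_val
  haveI : Nonempty ↥(Set.range ρ) := ⟨⟨ρ 0, Set.mem_range_self 0⟩⟩
  obtain ⟨Qs, hQcount, hQdense⟩ := TopologicalSpace.exists_countable_dense ↥(Set.range ρ)
  obtain ⟨qe, hqe⟩ := Set.Countable.exists_eq_range hQcount hQdense.nonempty
  -- diagonal subsequence making each q-coordinate-sequence converge
  obtain ⟨L, φ, hφ, hΘ⟩ := CompactSpace.tendsto_subseq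
    (X := ℕ → Circ) (fun k => fun j => (qe j : ℕ → Circ) k)
  have hqconv : ∀ j, Tendsto (fun k => (qe j : ℕ → Circ) (φ k)) atTop (𝓝 (L j)) := by
    intro j
    have := ((continuous_apply j).tendsto L).comp hΘ
    exact this
  set u : ℕ → G := fun k => s (φ k) with hudef
  have huinj : Function.Injective u := hsinj.comp hφ.injective
  set F' : ℕ → (↥(homSub G) → Circ) := fun k => fun χ => (χ : G → Circ) (u k) with hF'def
  have hmem : ∀ k, F' k ∈ A := fun k => ⟨u k, hsS (φ k), rfl⟩
  have hle : Filter.map F' atTop ≤ Filter.principal A :=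
    le_principal_iff.2 (Filter.eventually_map.2 (Filter.Eventually.of_forall hmem))
  obtain ⟨p, hpA, hp⟩ := hA.exists_clusterPt hle
  have hAclosed : IsClosed A := hA.isClosed
  -- every cluster point of F' factors through ρ, is continuous, and agrees with L on Q
  have key : ∀ pc, MapClusterPt pc atTop F' → pc ∈ A →
      ∃ P : ↥(Set.range ρ) → Circ, Continuous P ∧
        (∀ χ : ↥(homSub G), P ⟨ρ χ, Set.mem_range_self χ⟩ = pc χ) ∧
        (∀ j, P (qe j) = L j) := by
    intro pc hcp hpcA
    obtain ⟨V, hVle, hVt⟩ := mapClusterPt_iff_ultrafilter.1 hcp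
    have hVcoord : ∀ χ : ↥(homSub G),
        Tendsto (fun k => (χ : G → Circ) (u k)) (V : Filter ℕ) (𝓝 (pc χ)) := by
      intro χ; exact (tendsto_pi_nhds.1 hVt) χ
    have hfactor : ∀ χ χ' : ↥(homSub G), ρ χ = ρ χ' → pc χ = pc χ' := by
      intro χ χ' h
      have heqfun : (fun k => (χ : G → Circ) (u k)) = fun k => (χ' : G → Circ) (u k) :=
        funext fun k => congrFun h (φ k)
      refine tendsto_nhds_unique (hVcoord χ) ?_
      rw [heqfun]
      exact hVcoord χ'
    set ρ' : ↥(homSub G) → ↥(Set.range ρ) := fun χ => ⟨ρ χ, Set.mem_range_self χ⟩ with hρ'def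
    have hρ'cont : Continuous ρ' := hρcont.subtype_mk _
    have hρ'surj : Function.Surjective ρ' := by
      rintro ⟨y, χ, rfl⟩
      exact ⟨χ, rfl⟩
    have hquot : IsQuotientMap ρ' :=
      IsClosedMap.isQuotientMap (hρ'cont.isClosedMap) hρ'cont hρ'surj
    set P : ↥(Set.range ρ) → Circ := fun y => pc y.2.choose with hPdef
    have hPρ' : ∀ χ, P (ρ' χ) = pc χ := by
      intro χ
      exact hfactor _ _ ((ρ' χ).2.choose_spec)
    have hPcont : Continuous P := by
      rw [hquot.continuous_iff]
      have : (P ∘ ρ') = pc := funext hPρ'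
      rw [this]
      obtain ⟨g, hgS, hpe⟩ := hpcA
      rw [← hpe]
      exact (continuous_apply g).comp continuous_subtype_val
    refine ⟨P, hPcont, hPρ', ?_⟩
    intro j
    set c : ↥(homSub G) := (qe j).2.choose with hcdef
    have hcspec : ρ c = (qe j : ℕ → Circ) := (qe j).2.choose_spec
    have h1 : Tendsto (fun k => (c : G → Circ) (u k)) (V : Filter ℕ) (𝓝 (L j)) := by
      have heq : (fun k => (c : G → Circ) (u k)) = fun k => (qe j : ℕ → Circ) (φ k) :=
        funext fun k => congrFun hcspec (φ k)
      rw [heq]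
      exact (hqconv j).mono_left hVle
    have : P (qe j) = pc c := rfl
    rw [this]
    exact tendsto_nhds_unique (hVcoord c) h1
  obtain ⟨P, hPcont, hPρ', hPQ⟩ := key p hp hpA
  -- uniqueness of cluster points
  have huniq : ∀ p', MapClusterPt p' atTop F' → p' = p := by
    intro p' hp'
    have hp'A : p' ∈ A := by
      rw [← hAclosed.closure_eq]
      rw [mem_closure_iff_clusterPt]
      exact ClusterPt.mono hp' hle
    obtain ⟨P', hP'cont, hP'ρ', hP'Q⟩ := key p' hp' hp'A
    have hPP' : P' = P := by
      refine Continuous.ext_on hQdense hP'cont hPcont ?_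
      intro y hy
      have : y ∈ Set.range qe := by rw [← hqe]; exact hy
      obtain ⟨j, rfl⟩ := this
      rw [hPQ j, hP'Q j]
    funext χ
    rw [← hPρ' χ, ← hP'ρ' χ, hPP']
  -- the subsequence converges to p
  have htend : Tendsto F' atTop (𝓝 p) := by
    by_contra hnt
    rw [tendsto_nhds] at hnt
    push_neg at hnt
    obtain ⟨O, hOopen, hpO, hnev⟩ := hnt
    have hfr : ∃ᶠ x in Filter.map F' atTop, x ∈ Oᶜ := by
      rw [Filter.frequently_map]
      exact Filter.not_eventually.mp hnev
    set l : Filter (↥(homSub G) → Circ) := Filter.map F' atTop ⊓ Filter.principal Oᶜ with hldef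
    haveI hlne : l.NeBot := by
      rw [hldef, Filter.inf_principal_neBot_iff]
      intro U hU
      obtain ⟨x, hxOc, hxU⟩ := (hfr.and_eventually hU).exists
      exact ⟨x, hxU, hxOc⟩
    obtain ⟨q, hq⟩ := exists_clusterPt_of_compactSpace l
    have hq1 : MapClusterPt q atTop F' := hq.mono inf_le_left
    have hq2 : q ∈ Oᶜ := by
      have := hq.mono inf_le_right
      have hclosed : IsClosed Oᶜ := hOopen.isClosed_compl
      rw [← hclosed.closure_eq]
      rw [mem_closure_iff_clusterPt]
      exact this
    exact hq2 (huniq q hq1 ▸ hpO)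
  obtain ⟨g₂, hg₂S, hpe⟩ := hpA
  have hcoord : ∀ χ : ↥(homSub G),
      Tendsto (fun k => (χ : G → Circ) (u k)) atTop (𝓝 ((χ : G → Circ) g₂)) := by
    intro χ
    have := (tendsto_pi_nhds.1 htend) χ
    rwa [show p χ = (χ : G → Circ) g₂ by rw [← hpe]] at this
  -- drop the (at most one) index hitting g₂
  have hex : ∃ N : ℕ, ∀ k, u (k + N) ≠ g₂ := by
    by_cases hex : ∃ k, u k = g₂
    · refine ⟨hex.choose + 1, fun k hk => ?_⟩
      have := huinj (hk.trans hex.choose_spec.symm)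
      omega
    · push_neg at hex
      exact ⟨0, fun k => hex _⟩
  obtain ⟨N, hN⟩ := hex
  refine no_conv_seq (fun k => u (k + N) - g₂) (fun k => sub_ne_zero.mpr (hN k)) ?_
  intro χ
  have h1 : Tendsto (fun k => (χ : G → Circ) (u (k + N))) atTop (𝓝 ((χ : G → Circ) g₂)) :=
    (hcoord χ).comp (tendsto_add_atTop_nat N)
  have h2 : ∀ k, (χ : G → Circ) (u (k + N) - g₂)
      = (χ : G → Circ) (u (k + N)) - (χ : G → Circ) g₂ := by
    intro k
    exact map_sub (homSub.toHom χ) _ _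
  simp only [h2]
  have := h1.sub (tendsto_const_nhds (x := (χ : G → Circ) g₂))
  rwa [sub_self] at this
lemma finite_case {G : Type*} [AddCommGroup G] [Infinite G] {S : Set G} (hS : S.Finite)
    {ε : ℝ} (hε : 0 < ε) : ∃ χ : G →+ Circ, χ ≠ 0 ∧ ∀ g ∈ S, ‖χ g‖ < ε := by
  classical
  by_cases htop : AddSubgroup.closure S = ⊤
  · -- S generates G, so G is finitely generated; use a projection onto ℤ
    haveI : AddGroup.FG G := ⟨⟨hS.toFinset, by rwa [Set.Finite.coe_toFinset]⟩⟩
    haveI : Module.Finite ℤ G := Module.Finite.iff_addGroup_fg.2 ‹_›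
    obtain ⟨n, ι, fι, pp, hp, ee, ⟨ev⟩⟩ :=
      Module.equiv_free_prod_directSum (R := ℤ) (M := G)
    rcases Nat.eq_zero_or_pos n with hn | hn
    · -- would make G finite
      subst hn
      haveI : ∀ i : ι, Finite (ℤ ⧸ (ℤ ∙ pp i ^ ee i)) := by
        intro i
        have hne : pp i ^ ee i ≠ 0 := pow_ne_zero _ (hp i).ne_zero
        have hnabs : (pp i ^ ee i).natAbs ≠ 0 := by
          simpa [Int.natAbs_eq_zero] using hne
        haveI : NeZero ((pp i ^ ee i).natAbs) := ⟨hnabs⟩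
        exact Finite.of_equiv _ (Int.quotientSpanEquivZMod (pp i ^ ee i)).symm.toEquiv
      haveI : Finite (DirectSum ι (fun i => ℤ ⧸ (ℤ ∙ pp i ^ ee i))) :=
        Finite.of_equiv _ (DFinsupp.equivFunOnFintype (ι := ι)).symm
      haveI : Finite ((Fin 0 →₀ ℤ) × DirectSum ι (fun i => ℤ ⧸ (ℤ ∙ pp i ^ ee i))) := by
        haveI : Finite (Fin 0 →₀ ℤ) := Finite.of_equiv _ (Finsupp.equivFunOnFinite).symm
        infer_instance
      haveI := Finite.of_equiv _ ev.symm.toEquiv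
      exact (not_finite G).elim
    · set i0 : Fin n := ⟨0, hn⟩ with hi0
      set ψ : G →+ ℤ :=
        (Finsupp.applyAddHom i0).comp ((AddMonoidHom.fst _ _).comp ev.toAddMonoidHom) with hψ
      have hψval : ∀ g, ψ g = (ev g).1 i0 := fun g => rfl
      have hsurj : ∃ g₀, ψ g₀ = 1 := by
        refine ⟨ev.symm (Finsupp.single i0 1, 0), ?_⟩
        rw [hψval, LinearEquiv.apply_symm_apply]
        simp
      obtain ⟨g₀, hg₀⟩ := hsurj
      set M : ℕ := hS.toFinset.sup (fun g => (ψ g).natAbs) with hM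
      have hMb : ∀ g ∈ S, |(ψ g : ℝ)| ≤ (M : ℝ) := by
        intro g hg
        have h1 : (ψ g).natAbs ≤ M := Finset.le_sup (f := fun g => (ψ g).natAbs)
          (hS.mem_toFinset.2 hg)
        calc |(ψ g : ℝ)| = ((ψ g).natAbs : ℝ) := by
              simp [Nat.cast_natAbs]
          _ ≤ (M : ℝ) := by exact_mod_cast h1
      set δ : ℝ := min ε 1 / (2 * ((M : ℝ) + 1)) with hδ
      have hMpos : (0:ℝ) ≤ (M:ℝ) := Nat.cast_nonneg M
      have hMpos' : (0:ℝ) < 2 * ((M:ℝ) + 1) := by positivity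
      have hδpos : 0 < δ := div_pos (lt_min hε one_pos) hMpos'
      have hD : δ * (2*((M:ℝ)+1)) = min ε 1 := by
        rw [hδ]; field_simp
      have hδle : δ ≤ 1/2 := by nlinarith [min_le_right ε 1, mul_nonneg hMpos hδpos.le]
      have hδle' : (M:ℝ) * δ ≤ 1/2 := by nlinarith [min_le_right ε 1]
      have hδε : (M:ℝ) * δ < ε := by
        nlinarith [min_le_left ε 1, mul_nonneg hMpos hδpos.le]
      set χ : G →+ Circ := (zmultiplesHom Circ ((δ : ℝ) : Circ)).comp ψ with hχ
      have hχval : ∀ g, χ g = ((((ψ g : ℝ) * δ : ℝ)) : Circ) := by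
        intro g
        show (ψ g) • ((δ : ℝ) : Circ) = _
        rw [← zsmul_eq_mul]
        exact ((QuotientAddGroup.mk' (AddSubgroup.zmultiples (1:ℝ))).map_zsmul (ψ g) δ).symm
      refine ⟨χ, ?_, ?_⟩
      · intro h0
        have : χ g₀ = 0 := by rw [h0]; rfl
        rw [hχval, hg₀] at this
        simp only [Int.cast_one, one_mul] at this
        rw [AddCircle.coe_eq_zero_iff] at this
        obtain ⟨m, hm⟩ := this
        rw [zsmul_eq_mul, mul_one] at hm
        rcases le_or_gt m 0 with hm0 | hm0
        · have hmr : (m:ℝ) ≤ 0 := by exact_mod_cast hm0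
          rw [hm] at hmr
          linarith
        · have h1m : (1:ℝ) ≤ (m:ℝ) := by exact_mod_cast hm0
          rw [hm] at h1m
          linarith
      · intro g hg
        rw [hχval]
        have habs : |(ψ g : ℝ) * δ| ≤ 1/2 := by
          rw [abs_mul, abs_of_pos hδpos]
          calc |(ψ g : ℝ)| * δ ≤ (M:ℝ) * δ := by
                apply mul_le_mul_of_nonneg_right (hMb g hg) hδpos.le
            _ ≤ 1/2 := hδle'
        rw [circ_norm_coe_le habs, abs_mul, abs_of_pos hδpos]
        calc |(ψ g : ℝ)| * δ ≤ (M:ℝ) * δ :=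
              mul_le_mul_of_nonneg_right (hMb g hg) hδpos.le
          _ < ε := hδε
  · -- S does not generate; kill the closure
    have : ∃ x : G, x ∉ AddSubgroup.closure S := by
      by_contra h
      push_neg at h
      exact htop ((AddSubgroup.eq_top_iff' _).2 h)
    obtain ⟨x, hx⟩ := this
    have hx0 : (QuotientAddGroup.mk x : G ⧸ AddSubgroup.closure S) ≠ 0 := by
      intro h
      exact hx ((QuotientAddGroup.eq_zero_iff x).1 h)
    obtain ⟨ψ, hψ⟩ := exists_hom_ne_zero hx0
    refine ⟨ψ.comp (QuotientAddGroup.mk' _), fun h => hψ ?_, fun g hg => ?_⟩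
    · have := DFunLike.congr_fun h x
      simpa using this
    · have hg0 : (QuotientAddGroup.mk g : G ⧸ AddSubgroup.closure S) = 0 :=
        (QuotientAddGroup.eq_zero_iff _).2 (AddSubgroup.subset_closure hg)
      have : ψ.comp (QuotientAddGroup.mk' _) g = ψ 0 := by
        simp only [AddMonoidHom.comp_apply, QuotientAddGroup.mk'_apply, hg0]
      rw [this, map_zero, norm_zero]
      exact hε

end Aux

/-- For an infinite abelian group `G` with the discrete topology, `G#` (the image of `G`)
is a dense subgroup of the Bohr compactification `b(G_d)` which does not determine
`b(G_d)`. -/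
theorem statement16 {G : Type*} [AddCommGroup G] [Infinite G] [TopologicalSpace G]
    [DiscreteTopology G] :
    Dense ((bohrImage G : AddSubgroup ↥(bohrComp G)) : Set ↥(bohrComp G)) ∧
      ¬ Determines (bohrImage G) := by
  classical
  have hcl : IsClosed ((bohrComp G : Set (ContinuousAddMonoidHom G Circ → Circ))) :=
    AddSubgroup.isClosed_topologicalClosure _
  haveI : CompactSpace ↥(bohrComp G) := isCompact_iff_compactSpace.mp hcl.isCompact
  -- the image of `D` in the ambient group is exactly the range of `evalHom`
  have him : Subtype.val '' ((bohrImage G : AddSubgroup ↥(bohrComp G)) : Set ↥(bohrComp G))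
      = (((evalHom G).range : AddSubgroup (ContinuousAddMonoidHom G Circ → Circ))
          : Set (ContinuousAddMonoidHom G Circ → Circ)) := by
    ext z
    constructor
    · rintro ⟨y, hy, rfl⟩
      exact (AddSubgroup.mem_addSubgroupOf).1 hy
    · intro hz
      have hz' : z ∈ bohrComp G := AddSubgroup.le_topologicalClosure _ hz
      exact ⟨⟨z, hz'⟩, (AddSubgroup.mem_addSubgroupOf).2 hz, rfl⟩
  constructor
  · -- density
    intro x
    rw [closure_subtype, him]
    have hx : (x : ContinuousAddMonoidHom G Circ → Circ)
        ∈ (((evalHom G).range.topologicalClosure : AddSubgroup _)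
          : Set (ContinuousAddMonoidHom G Circ → Circ)) := x.2
    rwa [AddSubgroup.topologicalClosure_coe] at hx
  · -- non-determination
    intro hdet
    have h0up : IsOpen {(0 : ContinuousAddMonoidHom ↥(bohrComp G) Circ)} :=
      isOpen_zero_dual_of_compact
    have hres0 : resChar (bohrImage G) 0 = 0 := ContinuousAddMonoidHom.ext fun _ => rfl
    have h0dn : IsOpen {(0 : ContinuousAddMonoidHom ↥(bohrImage G) Circ)} := by
      have := hdet.isOpenMap _ h0up
      rwa [Set.image_singleton, hres0] at this
    obtain ⟨K, ε, hK, hε, hKprop⟩ := exists_compact_eps_of_isOpen_zero h0dn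
    -- the canonical elements of `bohrImage G`
    have hmem1 : ∀ g : G, evalHom G g ∈ bohrComp G := fun g =>
      AddSubgroup.le_topologicalClosure _ ⟨g, rfl⟩
    have hmem2 : ∀ g : G,
        (⟨evalHom G g, hmem1 g⟩ : ↥(bohrComp G)) ∈ bohrImage G := fun g =>
      (AddSubgroup.mem_addSubgroupOf).2 ⟨g, rfl⟩
    set dElt : G → ↥(bohrImage G) := fun g => ⟨⟨evalHom G g, hmem1 g⟩, hmem2 g⟩ with hdElt
    set S : Set G := {g : G | dElt g ∈ K} with hSdef
    have hKelt : ∀ x : ↥(bohrImage G), ∃ g : G, dElt g = x := by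
      intro x
      obtain ⟨g, hg⟩ := (AddSubgroup.mem_addSubgroupOf).1 x.2
      exact ⟨g, Subtype.ext (Subtype.ext hg)⟩
    -- characters of `G` as continuous characters
    set mkCam : ↥(homSub G) → ContinuousAddMonoidHom G Circ := fun χ =>
      ⟨homSub.toHom χ, continuous_of_discreteTopology⟩ with hmkCam
    -- compactness of the image of `S` in `Circ ^ (homSub G)`
    set Φ : ↥(bohrImage G) → (↥(homSub G) → Circ) := fun x χ =>
      (x : ↥(bohrComp G)).1 (mkCam χ) with hΦdef
    have hΦcont : Continuous Φ :=
      continuous_pi fun χ => (continuous_apply (mkCam χ)).comp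
        (continuous_subtype_val.comp continuous_subtype_val)
    have hΦd : ∀ g : G, Φ (dElt g) = fun χ : ↥(homSub G) => (χ : G → Circ) g := by
      intro g; funext χ; rfl
    have hΦK : Φ '' K = (fun g => (fun χ : ↥(homSub G) => (χ : G → Circ) g)) '' S := by
      ext z
      constructor
      · rintro ⟨x, hxK, rfl⟩
        obtain ⟨g, rfl⟩ := hKelt x
        exact ⟨g, hxK, (hΦd g).symm⟩
      · rintro ⟨g, hgS, rfl⟩
        exact ⟨dElt g, hgS, hΦd g⟩
    have hA : IsCompact ((fun g => (fun χ : ↥(homSub G) => (χ : G → Circ) g)) '' S) := by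
      rw [← hΦK]
      exact hK.image hΦcont
    rcases Set.finite_or_infinite S with hfin | hinf
    · -- finite case: a nonzero character small on S contradicts `hKprop`
      obtain ⟨χ, hχne, hχsmall⟩ := finite_case hfin hε
      set mkChar : ContinuousAddMonoidHom G Circ := ⟨χ, continuous_of_discreteTopology⟩
        with hmkChar
      set f : ContinuousAddMonoidHom ↥(bohrImage G) Circ :=
        ⟨AddMonoidHom.mk' (fun x => (x : ↥(bohrComp G)).1 mkChar) (fun a b => rfl),
          (continuous_apply mkChar).comp
            (continuous_subtype_val.comp continuous_subtype_val)⟩ with hfdef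
    -- `f` evaluates characters
      have hfval : ∀ g : G, f (dElt g) = χ g := fun g => rfl
      have hf0 : f = 0 := by
        apply hKprop
        intro x hxK
        obtain ⟨g, rfl⟩ := hKelt x
        rw [hfval g]
        exact hχsmall g hxK
      obtain ⟨g₀, hg₀⟩ := DFunLike.ne_iff.1 hχne
      apply hg₀
      have := DFunLike.congr_fun hf0 (dElt g₀)
      rw [hfval g₀] at this
      simpa using this
    · exact (core_infinite S hinf hA).elim
end
end

section
/- Let G be an Abelian group and let (x_n) be a sequence of distinct elements of G. Then S := {h ∈ Hom(G, ℝ/ℤ) : h(x_n) → 0} is a subgroup of the compact group Hom(G, ℝ/ℤ) (with the topology of pointwise convergence) that is Haar measurable with Haar measure zero. -/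
open scoped Pointwise
noncomputable section

namespace Statement17Aux

open MeasureTheory Filter Finset Topology
open scoped ENNReal NNReal

/-- The standard character of the circle, as a complex number. -/
noncomputable def e (t : Circ) : ℂ := (AddCircle.toCircle t : ℂ)

lemma e_add (s t : Circ) : e (s + t) = e s * e t := by
  simp [e, AddCircle.toCircle_add]

lemma e_zero : e 0 = 1 := by simp [e]

lemma norm_e (t : Circ) : ‖e t‖ = 1 := by
  simpa [e] using Circle.norm_coe (AddCircle.toCircle t)

lemma e_eq_one {t : Circ} (h : e t = 1) : t = 0 := by
  have h1 : AddCircle.toCircle t = AddCircle.toCircle (0 : Circ) := by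
    apply Subtype.coe_injective
    simpa [e, AddCircle.toCircle_zero] using h
  exact AddCircle.injective_toCircle one_ne_zero h1

lemma e_neg (t : Circ) : e (-t) = (e t)⁻¹ := by
  have h : e (-t) * e t = 1 := by rw [← e_add]; simp [e_zero]
  exact eq_inv_of_mul_eq_one_left h

lemma conj_e (t : Circ) : (starRingEnd ℂ) (e t) = e (-t) := by
  rw [e_neg, Complex.inv_eq_conj (norm_e t)]

lemma continuous_e : Continuous e :=
  continuous_subtype_val.comp AddCircle.continuous_toCircle

variable {G : Type*} [AddCommGroup G] [TopologicalSpace G] [DiscreteTopology G]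

/-- The evaluation of a character. -/
noncomputable def F (y : G) (h : ContinuousAddMonoidHom G Circ) : ℂ := e (h y)

lemma continuous_F (y : G) : Continuous (F (G := G) y) :=
  continuous_e.comp (continuous_eval_const y)

lemma compact_dual : CompactSpace (ContinuousAddMonoidHom G Circ) := by
  have h1 : CompactSpace C(G, Circ) := by
    rw [← isCompact_univ_iff]
    apply ArzelaAscoli.isCompact_of_equicontinuous
    · have himg : ContinuousMap.toFun '' (Set.univ : Set C(G, Circ)) = Set.univ := by
        apply Set.eq_univ_of_forall
        intro f
        exact ⟨ContinuousMap.mk f continuous_of_discreteTopology, Set.mem_univ _, rfl⟩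
      rw [himg]
      exact isCompact_univ
    · intro x U hU
      rw [nhds_discrete]
      exact Filter.eventually_pure.2 fun i => refl_mem_uniformity hU
  exact (ContinuousAddMonoidHom.isClosedEmbedding_toContinuousMap G Circ).compactSpace

/-- The canonical injection `AddCircle (1:ℚ) →+ AddCircle (1:ℝ)`. -/
noncomputable def qr : AddCircle (1 : ℚ) →+ Circ :=
  QuotientAddGroup.map _ _ (Rat.castHom ℝ).toAddMonoidHom (by
    intro q hq
    obtain ⟨n, hn⟩ := AddSubgroup.mem_zmultiples_iff.1 hq
    simp only [AddSubgroup.mem_comap]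
    refine AddSubgroup.mem_zmultiples_iff.2 ⟨n, ?_⟩
    show n • (1 : ℝ) = ((q : ℚ) : ℝ)
    rw [← hn]
    push_cast
    simp [zsmul_eq_mul])

lemma qr_ne_zero {a : AddCircle (1 : ℚ)} (h : a ≠ 0) : qr a ≠ 0 := by
  induction a using QuotientAddGroup.induction_on with
  | H q =>
    intro h0
    apply h
    have hq : ((q : ℝ) : Circ) = 0 := by
      simpa [qr, QuotientAddGroup.map_mk] using h0
    obtain ⟨n, hn⟩ := AddSubgroup.mem_zmultiples_iff.1 ((QuotientAddGroup.eq_zero_iff _).1 hq)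
    refine (QuotientAddGroup.eq_zero_iff _).2 (AddSubgroup.mem_zmultiples_iff.2 ⟨n, ?_⟩)
    have : ((n • (1 : ℚ) : ℚ) : ℝ) = (q : ℝ) := by push_cast; simpa using hn
    exact_mod_cast this

section Measure

variable [MeasurableSpace (ContinuousAddMonoidHom G Circ)]
  [BorelSpace (ContinuousAddMonoidHom G Circ)]
  (μ : Measure (ContinuousAddMonoidHom G Circ)) [μ.IsAddHaarMeasure]

lemma integrable_cont (f : ContinuousAddMonoidHom G Circ → ℂ) (hf : Continuous f) :
    Integrable f μ := by
  haveI := compact_dual (G := G)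
  haveI : IsFiniteMeasure μ := inferInstance
  exact hf.integrable_of_hasCompactSupport (isClosed_tsupport f).isCompact


lemma integrable_cont' (f : ContinuousAddMonoidHom G Circ → ℝ) (hf : Continuous f) :
    Integrable f μ := by
  haveI := compact_dual (G := G)
  haveI : IsFiniteMeasure μ := inferInstance
  exact hf.integrable_of_hasCompactSupport (isClosed_tsupport f).isCompact

lemma integral_F_eq_zero {y : G} (hy : y ≠ 0) : ∫ h, F y h ∂μ = 0 := by
  obtain ⟨c, hc⟩ := CharacterModule.exists_character_apply_ne_zero_of_ne_zero hy
  set χ : ContinuousAddMonoidHom G Circ :=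
    ⟨qr.comp c, continuous_of_discreteTopology⟩ with hχ
  have hχy : χ y ≠ 0 := qr_ne_zero hc
  have key : ∫ h, F y (χ + h) ∂μ = ∫ h, F y h ∂μ :=
    MeasureTheory.integral_add_left_eq_self _ χ
  have heval : ∀ h : ContinuousAddMonoidHom G Circ, F y (χ + h) = e (χ y) * F y h := by
    intro h
    show e ((χ + h) y) = e (χ y) * e (h y)
    rw [← e_add]
    rfl
  simp only [heval] at key
  rw [MeasureTheory.integral_const_mul] at key
  have h1 : e (χ y) ≠ 1 := fun h => hχy (e_eq_one h)
  have h2 : (e (χ y) - 1) * ∫ h, F y h ∂μ = 0 := by ring_nf; linear_combination key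
  rcases mul_eq_zero.1 h2 with h3 | h3
  · exact absurd (sub_eq_zero.1 h3) h1
  · exact h3

lemma F_def (y : G) (h : ContinuousAddMonoidHom G Circ) : F y h = e (h y) := rfl

lemma integral_FF {x : ℕ → G} (hx : Function.Injective x) (n m : ℕ) :
    ∫ h, F (x n) h * (starRingEnd ℂ) (F (x m) h) ∂μ
      = if n = m then (((μ Set.univ).toReal : ℝ) : ℂ) else 0 := by
  by_cases hnm : n = m
  · subst hnm
    simp only [if_pos rfl]
    have habs : ∀ h : ContinuousAddMonoidHom G Circ,
        F (x n) h * (starRingEnd ℂ) (F (x n) h) = 1 := by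
      intro h
      have h1 : ‖F (x n) h‖ = 1 := by
        exact norm_e _
      rw [Complex.mul_conj, Complex.normSq_eq_norm_sq, h1]
      norm_num
    simp only [habs]
    simp [MeasureTheory.integral_const, Complex.real_smul, measureReal_def]
  · simp only [if_neg hnm]
    have key : ∀ h : ContinuousAddMonoidHom G Circ,
        F (x n) h * (starRingEnd ℂ) (F (x m) h) = F (x n - x m) h := by
      intro h
      rw [F_def, F_def, F_def, conj_e, ← e_add, map_sub, sub_eq_add_neg]
    simp only [key]
    exact integral_F_eq_zero μ (sub_ne_zero.2 fun hEq => hnm (hx hEq))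

lemma integral_sq {x : ℕ → G} (hx : Function.Injective x) (N : ℕ) :
    ∫ h, ‖∑ n ∈ Finset.range N, F (x n) h‖ ^ 2 ∂μ = N * (μ Set.univ).toReal := by
  set S : ContinuousAddMonoidHom G Circ → ℂ := fun h => ∑ n ∈ Finset.range N, F (x n) h with hS
  have hScont : Continuous S := continuous_finset_sum _ fun n _ => continuous_F (x n)
  have hint : Integrable (fun h => S h * (starRingEnd ℂ) (S h)) μ :=
    integrable_cont μ _ (hScont.mul (Complex.continuous_conj.comp hScont))
  have hre : ∀ h, ‖S h‖ ^ 2 = (S h * (starRingEnd ℂ) (S h)).re := by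
    intro h
    rw [Complex.mul_conj]
    simp [Complex.normSq_eq_norm_sq, ← Complex.ofReal_pow]
  have hexp : ∀ h, S h * (starRingEnd ℂ) (S h)
      = ∑ n ∈ Finset.range N, ∑ m ∈ Finset.range N, F (x n) h * (starRingEnd ℂ) (F (x m) h) := by
    intro h
    rw [hS]
    rw [map_sum (starRingEnd ℂ), Finset.sum_mul_sum]
  have hintegr : ∀ n m : ℕ, Integrable (fun h => F (x n) h * (starRingEnd ℂ) (F (x m) h)) μ :=
    fun n m => integrable_cont μ _
      ((continuous_F (x n)).mul (Complex.continuous_conj.comp (continuous_F (x m))))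
  have hmain : ∫ h, S h * (starRingEnd ℂ) (S h) ∂μ = (N : ℂ) * ((μ Set.univ).toReal : ℂ) := by
    simp only [hexp]
    rw [MeasureTheory.integral_finset_sum _ (fun n _ =>
      MeasureTheory.integrable_finset_sum _ (fun m _ => hintegr n m))]
    have : ∀ n ∈ Finset.range N,
        ∫ h, ∑ m ∈ Finset.range N, F (x n) h * (starRingEnd ℂ) (F (x m) h) ∂μ
          = (((μ Set.univ).toReal : ℝ) : ℂ) := by
      intro n hn
      rw [MeasureTheory.integral_finset_sum _ (fun m _ => hintegr n m)]
      have : ∀ m ∈ Finset.range N,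
          ∫ h, F (x n) h * (starRingEnd ℂ) (F (x m) h) ∂μ
            = if n = m then (((μ Set.univ).toReal : ℝ) : ℂ) else 0 :=
        fun m _ => integral_FF μ hx n m
      rw [Finset.sum_congr rfl this, Finset.sum_ite_eq (Finset.range N) n
        (fun _ => (((μ Set.univ).toReal : ℝ) : ℂ)), if_pos hn]
    rw [Finset.sum_congr rfl this, Finset.sum_const, Finset.card_range, nsmul_eq_mul]
  calc ∫ h, ‖S h‖ ^ 2 ∂μ = ∫ h, (S h * (starRingEnd ℂ) (S h)).re ∂μ := by simp only [hre]
    _ = (∫ h, S h * (starRingEnd ℂ) (S h) ∂μ).re := by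
        rw [← RCLike.re_eq_complex_re]
        exact _root_.integral_re hint
    _ = N * (μ Set.univ).toReal := by rw [hmain]; simp

lemma measure_S_zero {x : ℕ → G} (hx : Function.Injective x) :
    μ {h : ContinuousAddMonoidHom G Circ |
        Tendsto (fun n => h (x n)) atTop (𝓝 0)} = 0 := by
  haveI := compact_dual (G := G)
  haveI : IsFiniteMeasure μ := inferInstance
  set c : ℝ := (μ Set.univ).toReal with hc
  set a : ℕ → (ContinuousAddMonoidHom G Circ) → ℝ :=
    fun N h => ‖(N : ℝ)⁻¹ • ∑ n ∈ Finset.range N, F (x n) h‖ ^ 2 with ha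
  have ha_cont : ∀ N, Continuous (a N) := fun N =>
    by
      exact (((continuous_finset_sum (Finset.range N) fun n _ => continuous_F (x n)).const_smul
        ((N : ℝ)⁻¹)).norm).pow 2
  have ha_nonneg : ∀ N h, 0 ≤ a N h := fun N h => sq_nonneg _
  have h_int : ∀ N : ℕ, ∫ h, a N h ∂μ = ((N : ℝ)⁻¹) ^ 2 * (N * c) := by
    intro N
    have hsplit : ∀ h, a N h = ((N : ℝ)⁻¹) ^ 2 * ‖∑ n ∈ Finset.range N, F (x n) h‖ ^ 2 := by
      intro h
      rw [ha]
      simp only [norm_smul, mul_pow, norm_inv, Real.norm_natCast]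
    simp only [hsplit]
    rw [MeasureTheory.integral_const_mul, integral_sq μ hx N]
  set v : ℕ → (ContinuousAddMonoidHom G Circ) → ℝ≥0∞ :=
    fun N h => ENNReal.ofReal (a N h) with hv
  have hv_meas : ∀ N, Measurable (v N) := fun N => ((ha_cont N).measurable).ennreal_ofReal
  have hv_int : ∀ N : ℕ, ∫⁻ h, v N h ∂μ = ENNReal.ofReal (((N : ℝ)⁻¹) ^ 2 * (N * c)) := by
    intro N
    rw [hv]
    rw [← MeasureTheory.ofReal_integral_eq_lintegral_ofReal
      (integrable_cont' μ _ (ha_cont N)) (Filter.Eventually.of_forall (ha_nonneg N)), h_int]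
  have hv_tend : Tendsto (fun N => ∫⁻ h, v N h ∂μ) atTop (𝓝 0) := by
    simp only [hv_int]
    have hreal : Tendsto (fun N : ℕ => ((N : ℝ)⁻¹) ^ 2 * (N * c)) atTop (𝓝 0) := by
      refine Tendsto.congr' ?_ (tendsto_const_div_atTop_nhds_zero_nat c)
      filter_upwards [eventually_gt_atTop 0] with N hN
      have hN' : (N : ℝ) ≠ 0 := Nat.cast_ne_zero.2 hN.ne'
      field_simp
    have := ENNReal.tendsto_ofReal hreal
    simpa using this
  have hS_sub : {h : ContinuousAddMonoidHom G Circ | Tendsto (fun n => h (x n)) atTop (𝓝 0)}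
      ⊆ {h | (1 : ℝ≥0∞) ≤ liminf (fun N => v N h) atTop} := by
    intro h hh
    have h1 : Tendsto (fun n => F (x n) h) atTop (𝓝 1) := by
      have := (continuous_e.tendsto 0).comp hh
      simpa [F_def, e_zero, Function.comp_def] using this
    have h2 : Tendsto (fun N : ℕ => (N : ℝ)⁻¹ • ∑ n ∈ Finset.range N, F (x n) h) atTop (𝓝 1) :=
      h1.cesaro_smul
    have h3 : Tendsto (fun N => a N h) atTop (𝓝 1) := by
      have := (h2.norm).pow 2
      simpa [ha] using this
    have h4 : Tendsto (fun N => v N h) atTop (𝓝 1) := by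
      have := ENNReal.tendsto_ofReal h3
      simpa [hv] using this
    exact le_of_eq (h4.liminf_eq).symm
  have hfinal : μ {h : ContinuousAddMonoidHom G Circ |
      Tendsto (fun n => h (x n)) atTop (𝓝 0)} ≤ 0 := by
    calc μ {h : ContinuousAddMonoidHom G Circ | Tendsto (fun n => h (x n)) atTop (𝓝 0)}
        ≤ μ {h | (1 : ℝ≥0∞) ≤ liminf (fun N => v N h) atTop} := measure_mono hS_sub
      _ ≤ ∫⁻ h, liminf (fun N => v N h) atTop ∂μ := by
          simpa using MeasureTheory.mul_meas_ge_le_lintegral₀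
            ((Measurable.liminf hv_meas).aemeasurable) 1
      _ ≤ liminf (fun N => ∫⁻ h, v N h ∂μ) atTop := MeasureTheory.lintegral_liminf_le hv_meas
      _ = 0 := hv_tend.liminf_eq
  exact le_antisymm hfinal zero_le


end Measure

end Statement17Aux

/-- For an abelian group `G` (discrete) and a sequence of distinct elements `x n` of `G`,
the set `S = {h ∈ Hom(G, ℝ/ℤ) : h (x n) → 0}` is a subgroup of the compact group
`Hom(G, ℝ/ℤ)` of Haar measure zero. -/
theorem statement17 {G : Type*} [AddCommGroup G] [TopologicalSpace G] [DiscreteTopology G]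
    (x : ℕ → G) (hx : Function.Injective x)
    [MeasurableSpace (ContinuousAddMonoidHom G Circ)]
    [BorelSpace (ContinuousAddMonoidHom G Circ)]
    (μ : MeasureTheory.Measure (ContinuousAddMonoidHom G Circ)) [μ.IsAddHaarMeasure] :
    CompactSpace (ContinuousAddMonoidHom G Circ) ∧
    (∃ S : AddSubgroup (ContinuousAddMonoidHom G Circ),
      (S : Set (ContinuousAddMonoidHom G Circ)) =
        {h | Filter.Tendsto (fun n => h (x n)) Filter.atTop (nhds 0)}) ∧
    μ {h : ContinuousAddMonoidHom G Circ |
        Filter.Tendsto (fun n => h (x n)) Filter.atTop (nhds 0)} = 0 := by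
  classical
  have hgrp : ∃ S : AddSubgroup (ContinuousAddMonoidHom G Circ),
      (S : Set (ContinuousAddMonoidHom G Circ)) =
        {h | Filter.Tendsto (fun n => h (x n)) Filter.atTop (nhds 0)} := by
    refine ⟨{ carrier := {h | Filter.Tendsto (fun n => h (x n)) Filter.atTop (nhds 0)}
              zero_mem' := ?_
              add_mem' := ?_
              neg_mem' := ?_ }, rfl⟩
    · intro a b ha hb
      have : Filter.Tendsto (fun n => a (x n) + b (x n)) Filter.atTop (nhds 0) := by
        simpa using Filter.Tendsto.add ha hb
      exact this
    · show Filter.Tendsto (fun _ : ℕ => (0 : Circ)) Filter.atTop (nhds 0)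
      exact tendsto_const_nhds
    · intro a ha
      have : Filter.Tendsto (fun n => -(a (x n))) Filter.atTop (nhds 0) := by
        simpa using Filter.Tendsto.neg ha
      exact this
  exact ⟨Statement17Aux.compact_dual, hgrp, Statement17Aux.measure_S_zero μ hx⟩
end
end
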